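/- There exists a connected (39_3) geometric configuration Z = (P, L) of points and lines in ℝ³ such that the group of isometries of ℝ³ preserving Z equals Sym_R(C), the group of orientation-preserving isometries g of ℝ³ with g(V_C) = V_C, where V_C = {(x,y,z) ∈ ℝ³ : x, y, z ∈ {−1,1}} is the vertex set of a cube. -/

import Mathlib

noncomputable section

/-- Euclidean 3-space. -/
abbrev E3 : Type := EuclideanSpace ℝ (Fin 3)

/-- The point (a, b, c) of ℝ³. -/
def pt (a b c : ℝ) : E3 := WithLp.toLp 2 ![a, b, c]

/-- The set of signs {-1, 1}. -/
def sgn : Set ℝ := {-1, 1}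

/-- The golden ratio φ = (1 + √5)/2. -/
def gr : ℝ := (1 + Real.sqrt 5) / 2

/-- Vertex set of a regular tetrahedron. -/
def VT : Set E3 := {pt 1 1 1, pt 1 (-1) (-1), pt (-1) 1 (-1), pt (-1) (-1) 1}

/-- Vertex set of a cube. -/
def VC : Set E3 := {p | ∃ a ∈ sgn, ∃ b ∈ sgn, ∃ c ∈ sgn, p = pt a b c}

/-- Vertex set of a regular octahedron. -/
def VO : Set E3 := {p | ∃ a ∈ sgn, p = pt a 0 0 ∨ p = pt 0 a 0 ∨ p = pt 0 0 a}

/-- Vertex set of a regular icosahedron. -/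
def VI : Set E3 :=
  {p | ∃ a ∈ sgn, ∃ b ∈ sgn,
    p = pt 0 a (b * gr) ∨ p = pt a (b * gr) 0 ∨ p = pt (a * gr) 0 b}

/-- Vertex set of a regular dodecahedron. -/
def VD : Set E3 :=
  {p | (∃ a ∈ sgn, ∃ b ∈ sgn, ∃ c ∈ sgn, p = pt a b c) ∨
    (∃ a ∈ sgn, ∃ b ∈ sgn,
      p = pt 0 (a / gr) (b * gr) ∨ p = pt (a / gr) (b * gr) 0 ∨ p = pt (b * gr) 0 (a / gr))}

/-- A line of ℝ³: a 1-dimensional affine subspace, viewed as a set of points. -/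
def IsLine (l : Set E3) : Prop :=
  ∃ p v : E3, v ≠ 0 ∧ l = {x | ∃ t : ℝ, x = p + t • v}

/-- A geometric configuration of points and lines in ℝ³: a finite set of points and a
finite set of lines such that two distinct lines contain at most one common point. -/
structure PLConfig where
  pts : Set E3
  lns : Set (Set E3)
  pts_finite : pts.Finite
  lns_finite : lns.Finite
  lns_line : ∀ l ∈ lns, IsLine l
  lines_meet : ∀ l₁ ∈ lns, ∀ l₂ ∈ lns, l₁ ≠ l₂ → (pts ∩ l₁ ∩ l₂).Subsingleton

/-- The valence of a point: the number of lines of the configuration through it. -/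
def PLConfig.pointValence (Z : PLConfig) (p : E3) : ℕ := {l ∈ Z.lns | p ∈ l}.ncard

/-- The valence of a line: the number of points of the configuration on it. -/
def PLConfig.lineValence (Z : PLConfig) (l : Set E3) : ℕ := (Z.pts ∩ l).ncard

/-- Adjacency in the Levi (incidence) graph of a configuration. -/
def PLConfig.LeviAdj (Z : PLConfig) : E3 ⊕ Set E3 → E3 ⊕ Set E3 → Prop
  | Sum.inl p, Sum.inr l => p ∈ Z.pts ∧ l ∈ Z.lns ∧ p ∈ l
  | Sum.inr l, Sum.inl p => p ∈ Z.pts ∧ l ∈ Z.lns ∧ p ∈ l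
  | _, _ => False

/-- Vertices of the Levi graph of a configuration. -/
def PLConfig.LeviVert (Z : PLConfig) : E3 ⊕ Set E3 → Prop
  | Sum.inl p => p ∈ Z.pts
  | Sum.inr l => l ∈ Z.lns

/-- A configuration is connected if its Levi graph is connected. -/
def PLConfig.Connected (Z : PLConfig) : Prop :=
  ∀ a b, Z.LeviVert a → Z.LeviVert b → Relation.ReflTransGen Z.LeviAdj a b

/-- A balanced (n_k) configuration: n points and n lines, all k-valent. -/
def PLConfig.IsBalanced (Z : PLConfig) (n k : ℕ) : Prop :=
  Z.pts.ncard = n ∧ Z.lns.ncard = n ∧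
    (∀ p ∈ Z.pts, Z.pointValence p = k) ∧ (∀ l ∈ Z.lns, Z.lineValence l = k)

/-- A (p_q, n_k) configuration: p q-valent points and n k-valent lines. -/
def PLConfig.IsConfig (Z : PLConfig) (p q n k : ℕ) : Prop :=
  Z.pts.ncard = p ∧ Z.lns.ncard = n ∧
    (∀ x ∈ Z.pts, Z.pointValence x = q) ∧ (∀ l ∈ Z.lns, Z.lineValence l = k)

/-- An isometry of ℝ³ preserves a configuration if it maps its point set onto itself
and maps every line of the configuration onto a line of the configuration. -/
def Preserves (g : E3 ≃ᵢ E3) (Z : PLConfig) : Prop :=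
  g '' Z.pts = Z.pts ∧ ∀ l ∈ Z.lns, g '' l ∈ Z.lns

/-- An isometry of ℝ³ is orientation-preserving if it is the composition of a linear
isometry of determinant 1 with a translation. -/
def OrientationPreserving (g : E3 ≃ᵢ E3) : Prop :=
  ∃ (f : E3 ≃ₗᵢ[ℝ] E3) (b : E3),
    LinearMap.det (f.toLinearEquiv : E3 →ₗ[ℝ] E3) = 1 ∧ ∀ x, g x = f x + b


namespace Aux

abbrev Z3 := ℤ × ℤ × ℤ
def ipt (x : Z3) : E3 := pt ((x.1 : ℝ)/5) ((x.2.1 : ℝ)/5) ((x.2.2 : ℝ)/5)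
def sub3 (a b : Z3) : Z3 := (a.1 - b.1, a.2.1 - b.2.1, a.2.2 - b.2.2)
def cross3 (u v : Z3) : Z3 :=
  (u.2.1 * v.2.2 - u.2.2 * v.2.1, u.2.2 * v.1 - u.1 * v.2.2, u.1 * v.2.1 - u.2.1 * v.1)
def onL (p q x : Z3) : Prop := cross3 (sub3 q p) (sub3 x p) = (0, 0, 0)
instance : DecidablePred (fun pqx : Z3 × Z3 × Z3 => onL pqx.1 pqx.2.1 pqx.2.2) := by
  unfold onL; infer_instance



lemma pt_add (a b c d e f : ℝ) : pt a b c + pt d e f = pt (a+d) (b+e) (c+f) := by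
  ext i; fin_cases i <;> simp [pt]
lemma pt_sub (a b c d e f : ℝ) : pt a b c - pt d e f = pt (a-d) (b-e) (c-f) := by
  ext i; fin_cases i <;> simp [pt]
lemma pt_smul (t a b c : ℝ) : t • pt a b c = pt (t*a) (t*b) (t*c) := by
  ext i; fin_cases i <;> simp [pt]
lemma pt_inj {a b c d e f : ℝ} : pt a b c = pt d e f ↔ a = d ∧ b = e ∧ c = f := by
  constructor
  · intro h; exact ⟨congrArg (fun v : E3 => v 0) h, congrArg (fun v : E3 => v 1) h, congrArg (fun v : E3 => v 2) h⟩
  · rintro ⟨rfl, rfl, rfl⟩; rfl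

def lineThrough (p q : E3) : Set E3 := {x | ∃ t : ℝ, x = p + t • (q - p)}

lemma self_mem_lineThrough (p q : E3) : p ∈ lineThrough p q := ⟨0, by simp⟩
lemma right_mem_lineThrough (p q : E3) : q ∈ lineThrough p q := ⟨1, by simp⟩

lemma lineThrough_eq_of_mem {p q x y : E3} (hpq : p ≠ q) (hx : x ∈ lineThrough p q)
    (hy : y ∈ lineThrough p q) (hxy : x ≠ y) : lineThrough x y = lineThrough p q := by
  obtain ⟨s, rfl⟩ := hx
  obtain ⟨t, rfl⟩ := hy
  have hu : q - p ≠ 0 := sub_ne_zero.2 (Ne.symm hpq)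
  have hst : t - s ≠ 0 := by
    intro h
    apply hxy
    have : s = t := by linarith [sub_eq_zero.1 h]
    rw [this]
  ext z
  constructor
  · rintro ⟨r, rfl⟩
    exact ⟨s + r * (t - s), by module⟩
  · rintro ⟨r, rfl⟩
    refine ⟨(r - s) / (t - s), ?_⟩
    have : ((r - s) / (t - s)) • ((t - s) • (q - p)) = (r - s) • (q - p) := by
      rw [smul_smul, div_mul_cancel₀ _ hst]
    calc p + r • (q - p) = (p + s • (q - p)) + (r - s) • (q - p) := by module
    _ = p + s • (q - p) + ((r-s)/(t-s)) • ((p + t • (q - p)) - (p + s • (q - p))) := by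
        rw [show (p + t • (q - p)) - (p + s • (q - p)) = (t - s) • (q - p) by module, this]

lemma ipt_inj : Function.Injective ipt := by
  rintro ⟨a1, a2, a3⟩ ⟨b1, b2, b3⟩ h
  rw [ipt, ipt, pt_inj] at h
  obtain ⟨h1, h2, h3⟩ := h
  have e1 : (a1 : ℝ) = b1 := by field_simp at h1; exact_mod_cast h1
  have e2 : (a2 : ℝ) = b2 := by field_simp at h2; exact_mod_cast h2
  have e3 : (a3 : ℝ) = b3 := by field_simp at h3; exact_mod_cast h3
  simp only [Prod.mk.injEq]
  exact ⟨by exact_mod_cast e1, by exact_mod_cast e2, by exact_mod_cast e3⟩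



lemma mem_line_iff {p q x : Z3} (hpq : p ≠ q) :
    ipt x ∈ lineThrough (ipt p) (ipt q) ↔ onL p q x := by
  obtain ⟨p1, p2, p3⟩ := p; obtain ⟨q1, q2, q3⟩ := q; obtain ⟨x1, x2, x3⟩ := x
  simp only [lineThrough, ipt, Set.mem_setOf_eq, pt_sub, pt_smul, pt_add, pt_inj,
    onL, cross3, sub3, Prod.mk.injEq]
  constructor
  · rintro ⟨t, h1, h2, h3⟩
    refine ⟨?_, ?_, ?_⟩
    · have r : ((q2:ℝ)-p2)*((x3:ℝ)-p3) - ((q3:ℝ)-p3)*((x2:ℝ)-p2) = 0 := by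
        linear_combination (5*((q2:ℝ)-p2))*h3 - (5*((q3:ℝ)-p3))*h2
      exact_mod_cast r
    · have r : ((q3:ℝ)-p3)*((x1:ℝ)-p1) - ((q1:ℝ)-p1)*((x3:ℝ)-p3) = 0 := by
        linear_combination (5*((q3:ℝ)-p3))*h1 - (5*((q1:ℝ)-p1))*h3
      exact_mod_cast r
    · have r : ((q1:ℝ)-p1)*((x2:ℝ)-p2) - ((q2:ℝ)-p2)*((x1:ℝ)-p1) = 0 := by
        linear_combination (5*((q1:ℝ)-p1))*h2 - (5*((q2:ℝ)-p2))*h1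
      exact_mod_cast r
  · rintro ⟨c1, c2, c3⟩
    have r1 : ((q2:ℝ)-p2)*((x3:ℝ)-p3) = ((q3:ℝ)-p3)*((x2:ℝ)-p2) := by
      have : (((q2 - p2) * (x3 - p3) - (q3 - p3) * (x2 - p2) : ℤ) : ℝ) = 0 := by exact_mod_cast c1
      push_cast at this; linarith
    have r2 : ((q3:ℝ)-p3)*((x1:ℝ)-p1) = ((q1:ℝ)-p1)*((x3:ℝ)-p3) := by
      have : (((q3 - p3) * (x1 - p1) - (q1 - p1) * (x3 - p3) : ℤ) : ℝ) = 0 := by exact_mod_cast c2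
      push_cast at this; linarith
    have r3 : ((q1:ℝ)-p1)*((x2:ℝ)-p2) = ((q2:ℝ)-p2)*((x1:ℝ)-p1) := by
      have : (((q1 - p1) * (x2 - p2) - (q2 - p2) * (x1 - p1) : ℤ) : ℝ) = 0 := by exact_mod_cast c3
      push_cast at this; linarith
    have hne : (q1 ≠ p1) ∨ (q2 ≠ p2) ∨ (q3 ≠ p3) := by
      by_contra h
      push_neg at h
      exact hpq (by simp [h.1, h.2.1, h.2.2])
    rcases hne with h | h | h
    · have hu : ((q1:ℝ) - p1) ≠ 0 := sub_ne_zero.2 (by exact_mod_cast h)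
      refine ⟨((x1:ℝ) - p1)/((q1:ℝ) - p1), ?_, ?_, ?_⟩ <;> field_simp <;> linarith [r3, r2]
    · have hu : ((q2:ℝ) - p2) ≠ 0 := sub_ne_zero.2 (by exact_mod_cast h)
      refine ⟨((x2:ℝ) - p2)/((q2:ℝ) - p2), ?_, ?_, ?_⟩ <;> field_simp <;> nlinarith [r1, r3]
    · have hu : ((q3:ℝ) - p3) ≠ 0 := sub_ne_zero.2 (by exact_mod_cast h)
      refine ⟨((x3:ℝ) - p3)/((q3:ℝ) - p3), ?_, ?_, ?_⟩ <;> field_simp <;> nlinarith [r1, r2]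


def Pdat : Fin 39 → Z3 := ![(0, 0, 0), (0, 0, 5), (0, 0, -5), (0, 5, 0), (0, -5, 0), (5, 0, 0), (-5, 0, 0), (5, 5, 5), (5, 5, -5), (5, -5, 5), (5, -5, -5), (-5, 5, 5), (-5, 5, -5), (-5, -5, 5), (-5, -5, -5), (-5, -4, -2), (-5, -2, 4), (-5, 2, -4), (-5, 4, 2), (-4, -5, 2), (-4, -2, -5), (-4, 2, 5), (-4, 5, -2), (-2, -5, -4), (-2, -4, 5), (-2, 4, -5), (-2, 5, 4), (2, -5, 4), (2, -4, -5), (2, 4, 5), (2, 5, -4), (4, -5, -2), (4, -2, 5), (4, 2, -5), (4, 5, 2), (5, -4, 2), (5, -2, -4), (5, 2, 4), (5, 4, -2)]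

def Ldat : Fin 39 → Fin 39 × Fin 39 := ![(0, 1), (0, 3), (0, 5), (1, 21), (1, 24), (2, 20), (2, 25), (3, 22), (3, 26), (4, 19), (4, 23), (5, 35), (5, 36), (6, 15), (6, 16), (7, 21), (7, 30), (7, 35), (8, 22), (8, 28), (8, 37), (9, 19), (9, 29), (9, 35), (10, 20), (10, 27), (10, 36), (11, 17), (11, 21), (11, 26), (12, 15), (12, 22), (12, 25), (13, 16), (13, 19), (13, 24), (14, 15), (14, 20), (14, 23)]

def Rdat : Fin 24 → Z3 × Z3 × Z3 := ![((1, 0, 0), (0, 1, 0), (0, 0, 1)), ((1, 0, 0), (0, -1, 0), (0, 0, -1)), ((1, 0, 0), (0, 0, 1), (0, -1, 0)), ((1, 0, 0), (0, 0, -1), (0, 1, 0)), ((-1, 0, 0), (0, 1, 0), (0, 0, -1)), ((-1, 0, 0), (0, -1, 0), (0, 0, 1)), ((-1, 0, 0), (0, 0, 1), (0, 1, 0)), ((-1, 0, 0), (0, 0, -1), (0, -1, 0)), ((0, 1, 0), (1, 0, 0), (0, 0, -1)), ((0, 1, 0), (-1, 0, 0), (0, 0, 1)), ((0, 1, 0),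 (0, 0, 1), (1, 0, 0)), ((0, 1, 0), (0, 0, -1), (-1, 0, 0)), ((0, -1, 0), (1, 0, 0), (0, 0, 1)), ((0, -1, 0), (-1, 0, 0), (0, 0, -1)), ((0, -1, 0), (0, 0, 1), (-1, 0, 0)), ((0, -1, 0), (0, 0, -1), (1, 0, 0)), ((0, 0, 1), (1, 0, 0), (0, 1, 0)), ((0, 0, 1), (-1, 0, 0), (0, -1, 0)), ((0, 0, 1), (0, 1, 0), (-1, 0, 0)), ((0, 0, 1), (0, -1, 0), (1, 0, 0)), ((0, 0, -1), (1, 0, 0), (0, -1, 0)), ((0, 0, -1), (-1, 0, 0), (0, 1, 0)), ((0, 0, -1), (0, 1, 0), (1, 0, 0)), ((0, 0, -1), (0, -1, 0), (-1, 0, 0))]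

def Fdat : Fin 24 → Z3 × Z3 × Z3 := ![((1, 0, 0), (0, 1, 0), (0, 0, -1)), ((1, 0, 0), (0, -1, 0), (0, 0, 1)), ((1, 0, 0), (0, 0, 1), (0, 1, 0)), ((1, 0, 0), (0, 0, -1), (0, -1, 0)), ((-1, 0, 0), (0, 1, 0), (0, 0, 1)), ((-1, 0, 0), (0, -1, 0), (0, 0, -1)), ((-1, 0, 0), (0, 0, 1), (0, -1, 0)), ((-1, 0, 0), (0, 0, -1), (0, 1, 0)), ((0, 1, 0), (1, 0, 0), (0, 0, 1)), ((0, 1, 0), (-1, 0, 0), (0, 0, -1)), ((0, 1, 0), (0, 0, 1), (-1, 0, 0)), ((0, 1, 0), (0, 0, -1), (1, 0, 0)), ((0, -1, 0), (1, 0, 0), (0, 0, -1)), ((0, -1, 0), (-1, 0, 0), (0, 0, 1)), ((0, -1, 0), (0, 0, 1), (1, 0, 0)), ((0, -1, 0), (0, 0, -1), (-1, 0, 0)), ((0, 0, 1), (1, 0, 0), (0, -1, 0)), ((0, 0, 1), (-1, 0, 0), (0, 1, 0)), ((0, 0, 1), (0, 1, 0), (1, 0, 0)), ((0, 0, 1),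 (0, -1, 0), (-1, 0, 0)), ((0, 0, -1), (1, 0, 0), (0, 1, 0)), ((0, 0, -1), (-1, 0, 0), (0, -1, 0)), ((0, 0, -1), (0, 1, 0), (-1, 0, 0)), ((0, 0, -1), (0, -1, 0), (1, 0, 0))]

def rotP : Fin 24 → Fin 39 → Fin 39 := ![![0, 1, 2, 3, 4, 5, 6, 7, 8, 9, 10, 11, 12, 13, 14, 15, 16, 17, 18, 19, 20, 21, 22, 23, 24, 25, 26, 27, 28, 29, 30, 31, 32, 33, 34, 35, 36, 37, 38], ![0, 2, 1, 4, 3, 5, 6, 10, 9, 8, 7, 14, 13, 12, 11, 18, 17, 16, 15, 22, 21, 20, 19, 26, 25, 24, 23, 30, 29, 28, 27, 34, 33, 32, 31, 38, 37, 36, 35], ![0, 4, 3, 1, 2, 5, 6, 9, 7, 10, 8, 13, 11, 14, 12, 17, 15, 18, 16, 20, 22, 19, 21, 25, 23, 26, 24, 28, 30, 27, 29, 33, 31, 34, 32, 36, 38, 35, 37], ![0, 3, 4, 2, 1, 5, 6, 8, 10, 7, 9, 12, 14, 11, 13, 16, 18, 15, 17, 21, 19, 22, 20, 24, 26, 23,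 25, 29, 27, 30, 28, 32, 34, 31, 33, 37, 35, 38, 36], ![0, 2, 1, 3, 4, 6, 5, 12, 11, 14, 13, 8, 7, 10, 9, 35, 36, 37, 38, 31, 32, 33, 34, 27, 28, 29, 30, 23, 24, 25, 26, 19, 20, 21, 22, 15, 16, 17, 18], ![0, 1, 2, 4, 3, 6, 5, 13, 14, 11, 12, 9, 10, 7, 8, 38, 37, 36, 35, 34, 33, 32, 31, 30, 29, 28, 27, 26, 25, 24, 23, 22, 21, 20, 19, 18, 17, 16, 15], ![0, 3, 4, 1, 2, 6, 5, 11, 13, 12, 14, 7, 9, 8, 10, 36, 38, 35, 37, 33, 31, 34, 32, 28, 30, 27, 29, 25, 23, 26, 24, 20, 22, 19, 21, 17, 15, 18, 16], ![0, 4, 3, 2, 1, 6, 5, 14, 12, 13, 11, 10, 8, 9, 7, 37, 35, 38, 36, 32, 34, 31, 33, 29, 27, 30, 28, 24, 26, 23, 25, 21, 19, 22, 20, 16, 18, 15, 17], ![0, 2, 1, 5, 6, 3, 4, 8, 7, 12, 11, 10, 9, 14, 13, 19, 23, 27, 31, 15, 24, 28, 35, 16, 20, 32, 36, 17, 21, 33,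 37, 18, 25, 29, 38, 22, 26, 30, 34], ![0, 1, 2, 6, 5, 3, 4, 11, 12, 7, 8, 13, 14, 9, 10, 31, 27, 23, 19, 35, 28, 24, 15, 36, 32, 20, 16, 37, 33, 21, 17, 38, 29, 25, 18, 34, 30, 26, 22], ![0, 5, 6, 1, 2, 3, 4, 7, 11, 8, 12, 9, 13, 10, 14, 23, 31, 19, 27, 28, 15, 35, 24, 20, 36, 16, 32, 33, 17, 37, 21, 25, 38, 18, 29, 30, 22, 34, 26], ![0, 6, 5, 2, 1, 3, 4, 12, 8, 11, 7, 14, 10, 13, 9, 27, 19, 31, 23, 24, 35, 15, 28, 32, 16, 36, 20, 21, 37, 17, 33, 29, 18, 38, 25, 26, 34, 22, 30], ![0, 1, 2, 5, 6, 4, 3, 9, 10, 13, 14, 7, 8, 11, 12, 22, 26, 30, 34, 18, 25, 29, 38, 17, 21, 33, 37, 16, 20, 32, 36, 15, 24, 28, 35, 19, 23, 27, 31], ![0, 2, 1, 6, 5, 4, 3, 14, 13, 10, 9, 12, 11, 8, 7, 34, 30, 26, 22, 38, 29, 25, 18, 37, 33, 21, 17, 36, 32, 20, 16, 35, 28, 24,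 15, 31, 27, 23, 19], ![0, 6, 5, 1, 2, 4, 3, 13, 9, 14, 10, 11, 7, 12, 8, 30, 22, 34, 26, 25, 38, 18, 29, 33, 17, 37, 21, 20, 36, 16, 32, 28, 15, 35, 24, 23, 31, 19, 27], ![0, 5, 6, 2, 1, 4, 3, 10, 14, 9, 13, 8, 12, 7, 11, 26, 34, 22, 30, 29, 18, 38, 25, 21, 37, 17, 33, 32, 16, 36, 20, 24, 35, 15, 28, 27, 19, 31, 23], ![0, 3, 4, 5, 6, 1, 2, 7, 9, 11, 13, 8, 10, 12, 14, 20, 25, 28, 33, 17, 23, 30, 36, 15, 22, 31, 38, 18, 19, 34, 35, 16, 26, 27, 37, 21, 24, 29, 32], ![0, 4, 3, 6, 5, 1, 2, 13, 11, 9, 7, 14, 12, 10, 8, 33, 28, 25, 20, 36, 30, 23, 17, 38, 31, 22, 15, 35, 34, 19, 18, 37, 27, 26, 16, 32, 29, 24, 21], ![0, 6, 5, 3, 4, 1, 2, 11, 7, 13, 9, 12, 8, 14, 10, 28, 20, 33, 25, 23, 36, 17, 30, 31, 15, 38, 22, 19, 35, 18, 34, 27, 16, 37, 26, 24, 32, 21,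 29], ![0, 5, 6, 4, 3, 1, 2, 9, 13, 7, 11, 10, 14, 8, 12, 25, 33, 20, 28, 30, 17, 36, 23, 22, 38, 15, 31, 34, 18, 35, 19, 26, 37, 16, 27, 29, 21, 32, 24], ![0, 4, 3, 5, 6, 2, 1, 10, 8, 14, 12, 9, 7, 13, 11, 21, 24, 29, 32, 16, 26, 27, 37, 18, 19, 34, 35, 15, 22, 31, 38, 17, 23, 30, 36, 20, 25, 28, 33], ![0, 3, 4, 6, 5, 2, 1, 12, 14, 8, 10, 11, 13, 7, 9, 32, 29, 24, 21, 37, 27, 26, 16, 35, 34, 19, 18, 38, 31, 22, 15, 36, 30, 23, 17, 33, 28, 25, 20], ![0, 5, 6, 3, 4, 2, 1, 8, 12, 10, 14, 7, 11, 9, 13, 24, 32, 21, 29, 27, 16, 37, 26, 19, 35, 18, 34, 31, 15, 38, 22, 23, 36, 17, 30, 28, 20, 33, 25], ![0, 6, 5, 4, 3, 2, 1, 14, 10, 12, 8, 13, 9, 11, 7, 29, 21, 32, 24, 26, 37, 16, 27, 34, 18, 35, 19, 22, 38, 15, 31, 30, 17, 36, 23, 25, 33, 20, 28]]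

def rotL : Fin 24 → Fin 39 → Fin 39 := ![![0, 1, 2, 3, 4, 5, 6, 7, 8, 9, 10, 11, 12, 13, 14, 15, 16, 17, 18, 19, 20, 21, 22, 23, 24, 25, 26, 27, 28, 29, 30, 31, 32, 33, 34, 35, 36, 37, 38], ![0, 1, 2, 5, 6, 3, 4, 9, 10, 7, 8, 11, 12, 13, 14, 24, 25, 26, 21, 22, 23, 18, 19, 20, 15, 16, 17, 36, 37, 38, 33, 34, 35, 30, 31, 32, 27, 28, 29], ![1, 0, 2, 9, 10, 7, 8, 3, 4, 5, 6, 12, 11, 14, 13, 21, 22, 23, 15, 16, 17, 24, 25, 26, 18, 19, 20, 33, 34, 35, 27, 28, 29, 36, 37, 38, 30, 31, 32], ![1, 0, 2, 7, 8, 9, 10, 5, 6, 3, 4, 12, 11, 14, 13, 18, 19, 20, 24, 25, 26, 15, 16, 17, 21, 22, 23, 30, 31, 32, 36, 37, 38, 27, 28, 29, 33, 34, 35], ![0, 1, 2, 5, 6, 3, 4, 7, 8, 9, 10, 13, 14, 11, 12, 32, 31, 30, 29, 28, 27, 38, 37, 36, 35, 34, 33, 20, 19, 18, 17, 16, 15,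 26, 25, 24, 23, 22, 21], ![0, 1, 2, 3, 4, 5, 6, 9, 10, 7, 8, 13, 14, 11, 12, 35, 34, 33, 38, 37, 36, 29, 28, 27, 32, 31, 30, 23, 22, 21, 26, 25, 24, 17, 16, 15, 20, 19, 18], ![1, 0, 2, 7, 8, 9, 10, 3, 4, 5, 6, 14, 13, 12, 11, 29, 28, 27, 35, 34, 33, 32, 31, 30, 38, 37, 36, 17, 16, 15, 23, 22, 21, 20, 19, 18, 26, 25, 24], ![1, 0, 2, 9, 10, 7, 8, 5, 6, 3, 4, 14, 13, 12, 11, 38, 37, 36, 32, 31, 30, 35, 34, 33, 29, 28, 27, 26, 25, 24, 20, 19, 18, 23, 22, 21, 17, 16, 15], ![0, 2, 1, 6, 5, 4, 3, 11, 12, 13, 14, 7, 8, 9, 10, 19, 20, 18, 17, 15, 16, 30, 32, 31, 28, 27, 29, 25, 24, 26, 21, 23, 22, 38, 36, 37, 34, 35, 33], ![0, 2, 1, 4, 3, 6, 5, 13, 14, 11, 12, 7, 8, 9, 10, 28, 27, 29, 30, 32, 31, 17, 15, 16, 19, 20, 18, 34, 35, 33, 38, 36, 37, 21, 23, 22, 25,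 24, 26], ![2, 0, 1, 11, 12, 13, 14, 4, 3, 6, 5, 8, 7, 10, 9, 17, 15, 16, 28, 27, 29, 19, 20, 18, 30, 32, 31, 21, 23, 22, 34, 35, 33, 25, 24, 26, 38, 36, 37], ![2, 0, 1, 13, 14, 11, 12, 6, 5, 4, 3, 8, 7, 10, 9, 30, 32, 31, 19, 20, 18, 28, 27, 29, 17, 15, 16, 38, 36, 37, 25, 24, 26, 34, 35, 33, 21, 23, 22], ![0, 2, 1, 4, 3, 6, 5, 11, 12, 13, 14, 9, 10, 7, 8, 22, 23, 21, 26, 24, 25, 33, 35, 34, 37, 36, 38, 16, 15, 17, 18, 20, 19, 29, 27, 28, 31, 32, 30], ![0, 2, 1, 6, 5, 4, 3, 13, 14, 11, 12, 9, 10, 7, 8, 37, 36, 38, 33, 35, 34, 26, 24, 25, 22, 23, 21, 31, 32, 30, 29, 27, 28, 18, 20, 19, 16, 15, 17], ![2, 0, 1, 13, 14, 11, 12, 4, 3, 6, 5, 10, 9, 8, 7, 33, 35, 34, 22, 23, 21, 37, 36, 38, 26, 24, 25, 29, 27, 28, 16, 15, 17, 31, 32, 30, 18, 20, 19], ![2,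 0, 1, 11, 12, 13, 14, 6, 5, 4, 3, 10, 9, 8, 7, 26, 24, 25, 37, 36, 38, 22, 23, 21, 33, 35, 34, 18, 20, 19, 31, 32, 30, 16, 15, 17, 29, 27, 28], ![1, 2, 0, 8, 7, 10, 9, 12, 11, 14, 13, 3, 4, 5, 6, 16, 17, 15, 23, 21, 22, 27, 29, 28, 34, 33, 35, 19, 18, 20, 24, 26, 25, 32, 30, 31, 37, 38, 36], ![1, 2, 0, 10, 9, 8, 7, 14, 13, 12, 11, 3, 4, 5, 6, 34, 33, 35, 27, 29, 28, 23, 21, 22, 16, 17, 15, 37, 38, 36, 32, 30, 31, 24, 26, 25, 19, 18, 20], ![2, 1, 0, 14, 13, 12, 11, 8, 7, 10, 9, 4, 3, 6, 5, 27, 29, 28, 16, 17, 15, 34, 33, 35, 23, 21, 22, 32, 30, 31, 19, 18, 20, 37, 38, 36, 24, 26, 25], ![2, 1, 0, 12, 11, 14, 13, 10, 9, 8, 7, 4, 3, 6, 5, 23, 21, 22, 34, 33, 35, 16, 17, 15, 27, 29, 28, 24, 26, 25, 37, 38, 36, 19, 18, 20, 32, 30, 31], ![1, 2, 0, 10, 9,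 8, 7, 12, 11, 14, 13, 5, 6, 3, 4, 25, 26, 24, 20, 18, 19, 36, 38, 37, 31, 30, 32, 22, 21, 23, 15, 17, 16, 35, 33, 34, 28, 29, 27], ![1, 2, 0, 8, 7, 10, 9, 14, 13, 12, 11, 5, 6, 3, 4, 31, 30, 32, 36, 38, 37, 20, 18, 19, 25, 26, 24, 28, 29, 27, 35, 33, 34, 15, 17, 16, 22, 21, 23], ![2, 1, 0, 12, 11, 14, 13, 8, 7, 10, 9, 6, 5, 4, 3, 20, 18, 19, 31, 30, 32, 25, 26, 24, 36, 38, 37, 15, 17, 16, 28, 29, 27, 22, 21, 23, 35, 33, 34], ![2, 1, 0, 14, 13, 12, 11, 10, 9, 8, 7, 6, 5, 4, 3, 36, 38, 37, 25, 26, 24, 31, 30, 32, 20, 18, 19, 35, 33, 34, 22, 21, 23, 28, 29, 27, 15, 17, 16]]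

def wit : Fin 24 → Fin 39 := ![15, 15, 15, 15, 15, 15, 15, 15, 15, 15, 15, 15, 15, 15, 15, 15, 15, 15, 15, 15, 15, 15, 15, 15]

def VZ : Fin 8 → Z3 := ![(5, 5, 5), (5, 5, -5), (5, -5, 5), (5, -5, -5), (-5, 5, 5), (-5, 5, -5), (-5, -5, 5), (-5, -5, -5)]

def onLP (j i : Fin 39) : Prop := onL (Pdat (Ldat j).1) (Pdat (Ldat j).2) (Pdat i)
instance (j i : Fin 39) : Decidable (onLP j i) := by unfold onLP onL; infer_instance

set_option maxRecDepth 40000 in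
lemma pdat_inj : Function.Injective Pdat := by decide
set_option maxRecDepth 40000 in
lemma d_point_val : ∀ i : Fin 39, (Finset.univ.filter (fun j => onLP j i)).card = 3 := by decide
set_option maxRecDepth 40000 in
lemma d_line_val : ∀ j : Fin 39, (Finset.univ.filter (fun i => onLP j i)).card = 3 := by decide
set_option maxRecDepth 40000 in
lemma d_line_unique : ∀ i j : Fin 39, onLP j (Ldat i).1 → onLP j (Ldat i).2 → i = j := by decide
set_option maxRecDepth 40000 in
lemma d_endpts : ∀ i : Fin 39, (Ldat i).1 ≠ (Ldat i).2 := by decide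

open Classical in
def Ppt (i : Fin 39) : E3 := ipt (Pdat i)
def lineOf (i : Fin 39) : Set E3 := lineThrough (Ppt (Ldat i).1) (Ppt (Ldat i).2)

lemma ppt_inj : Function.Injective Ppt := ipt_inj.comp pdat_inj

lemma pdat_endpts_ne (i : Fin 39) : Pdat (Ldat i).1 ≠ Pdat (Ldat i).2 :=
  fun h => d_endpts i (pdat_inj h)

lemma ppt_endpts_ne (i : Fin 39) : Ppt (Ldat i).1 ≠ Ppt (Ldat i).2 :=
  fun h => d_endpts i (ppt_inj h)

lemma mem_lineOf {i j : Fin 39} : Ppt i ∈ lineOf j ↔ onLP j i :=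
  mem_line_iff (pdat_endpts_ne j)

lemma lineOf_inj : Function.Injective lineOf := by
  intro i j h
  refine d_line_unique i j ?_ ?_
  · exact mem_lineOf.1 (h ▸ self_mem_lineThrough _ _)
  · exact mem_lineOf.1 (h ▸ right_mem_lineThrough _ _)

def Zcfg : PLConfig where
  pts := Set.range Ppt
  lns := Set.range lineOf
  pts_finite := Set.finite_range _
  lns_finite := Set.finite_range _
  lns_line := by
    rintro l ⟨i, rfl⟩
    exact ⟨Ppt (Ldat i).1, Ppt (Ldat i).2 - Ppt (Ldat i).1,
      sub_ne_zero.2 (ppt_endpts_ne i).symm, rfl⟩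
  lines_meet := by
    rintro l₁ ⟨i, rfl⟩ l₂ ⟨j, rfl⟩ hne x hx y hy
    by_contra hxy
    apply hne
    unfold lineOf at hx hy ⊢
    rw [← lineThrough_eq_of_mem (ppt_endpts_ne i) hx.1.2 hy.1.2 hxy,
        lineThrough_eq_of_mem (ppt_endpts_ne j) hx.2 hy.2 hxy]

lemma Zpts : Zcfg.pts = Set.range Ppt := rfl
lemma Zlns : Zcfg.lns = Set.range lineOf := rfl

lemma ncard_setOf_fin {n : ℕ} (P : Fin n → Prop) [DecidablePred P] :
    {j | P j}.ncard = (Finset.univ.filter P).card := by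
  rw [show {j | P j} = ↑(Finset.univ.filter P) by ext j; simp]
  exact Set.ncard_coe_finset _

open Classical in
lemma Zpts_ncard : Zcfg.pts.ncard = 39 := by
  rw [Zpts, ← Set.image_univ, ← Finset.coe_univ, ← Finset.coe_image,
    Set.ncard_coe_finset, Finset.card_image_of_injective _ ppt_inj, Finset.card_univ,
    Fintype.card_fin]

open Classical in
lemma Zlns_ncard : Zcfg.lns.ncard = 39 := by
  rw [Zlns, ← Set.image_univ, ← Finset.coe_univ, ← Finset.coe_image,
    Set.ncard_coe_finset, Finset.card_image_of_injective _ lineOf_inj, Finset.card_univ,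
    Fintype.card_fin]

lemma Zpoint_val (i : Fin 39) : Zcfg.pointValence (Ppt i) = 3 := by
  unfold PLConfig.pointValence
  have h1 : {l ∈ Zcfg.lns | Ppt i ∈ l} = lineOf '' {j | onLP j i} := by
    ext l
    constructor
    · rintro ⟨⟨j, rfl⟩, hl⟩
      exact ⟨j, mem_lineOf.1 hl, rfl⟩
    · rintro ⟨j, hj, rfl⟩
      exact ⟨⟨j, rfl⟩, mem_lineOf.2 hj⟩
  rw [h1, Set.ncard_image_of_injective _ lineOf_inj, ncard_setOf_fin, d_point_val]

lemma Zline_val (j : Fin 39) : Zcfg.lineValence (lineOf j) = 3 := by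
  unfold PLConfig.lineValence
  have h1 : Zcfg.pts ∩ lineOf j = Ppt '' {i | onLP j i} := by
    ext x
    constructor
    · rintro ⟨⟨i, rfl⟩, hl⟩
      exact ⟨i, mem_lineOf.1 hl, rfl⟩
    · rintro ⟨i, hi, rfl⟩
      exact ⟨⟨i, rfl⟩, mem_lineOf.2 hi⟩
  rw [h1, Set.ncard_image_of_injective _ ppt_inj, ncard_setOf_fin, d_line_val]

lemma Zbalanced : Zcfg.IsBalanced 39 3 := by
  refine ⟨Zpts_ncard, Zlns_ncard, ?_, ?_⟩
  · rintro p ⟨i, rfl⟩; exact Zpoint_val i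
  · rintro l ⟨j, rfl⟩; exact Zline_val j



lemma adjPL {i j : Fin 39} (h : onLP j i) :
    Zcfg.LeviAdj (Sum.inl (Ppt i)) (Sum.inr (lineOf j)) :=
  ⟨⟨i, rfl⟩, ⟨j, rfl⟩, mem_lineOf.2 h⟩

lemma adjLP {i j : Fin 39} (h : onLP j i) :
    Zcfg.LeviAdj (Sum.inr (lineOf j)) (Sum.inl (Ppt i)) :=
  ⟨⟨i, rfl⟩, ⟨j, rfl⟩, mem_lineOf.2 h⟩

lemma reachP : ∀ i : Fin 39, Relation.ReflTransGen Zcfg.LeviAdj (Sum.inl (Ppt i)) (Sum.inl (Ppt 0)) := by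
  intro i; fin_cases i
  · exact Relation.ReflTransGen.refl
  · exact (Relation.ReflTransGen.head (adjPL (i := 1) (j := 0) (by decide)) (Relation.ReflTransGen.head (adjLP (j := 0) (i := 0) (by decide)) Relation.ReflTransGen.refl))
  · exact (Relation.ReflTransGen.head (adjPL (i := 2) (j := 0) (by decide)) (Relation.ReflTransGen.head (adjLP (j := 0) (i := 0) (by decide)) Relation.ReflTransGen.refl))
  · exact (Relation.ReflTransGen.head (adjPL (i := 3) (j := 1) (by decide)) (Relation.ReflTransGen.head (adjLP (j := 1) (i := 0) (by decide)) Relation.ReflTransGen.refl))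
  · exact (Relation.ReflTransGen.head (adjPL (i := 4) (j := 1) (by decide)) (Relation.ReflTransGen.head (adjLP (j := 1) (i := 0) (by decide)) Relation.ReflTransGen.refl))
  · exact (Relation.ReflTransGen.head (adjPL (i := 5) (j := 2) (by decide)) (Relation.ReflTransGen.head (adjLP (j := 2) (i := 0) (by decide)) Relation.ReflTransGen.refl))
  · exact (Relation.ReflTransGen.head (adjPL (i := 6) (j := 2) (by decide)) (Relation.ReflTransGen.head (adjLP (j := 2) (i := 0) (by decide)) Relation.ReflTransGen.refl))
  · exact (Relation.ReflTransGen.head (adjPL (i := 7) (j := 15) (by decide)) (Relation.ReflTransGen.head (adjLP (j := 15) (i := 21) (by decide)) (Relation.ReflTransGen.head (adjPL (i := 21) (j := 3) (by decide)) (Relation.ReflTransGen.head (adjLP (j := 3) (i := 1) (by decide)) (Relation.ReflTransGen.head (adjPL (i := 1) (j := 0) (by decide)) (Relation.ReflTransGen.head (adjLP (j := 0) (i := 0) (by decide)) Relation.ReflTransGen.refl))))))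
  · exact (Relation.ReflTransGen.head (adjPL (i := 8) (j := 19) (by decide)) (Relation.ReflTransGen.head (adjLP (j := 19) (i := 33) (by decide)) (Relation.ReflTransGen.head (adjPL (i := 33) (j := 5) (by decide)) (Relation.ReflTransGen.head (adjLP (j := 5) (i := 2) (by decide)) (Relation.ReflTransGen.head (adjPL (i := 2) (j := 0) (by decide)) (Relation.ReflTransGen.head (adjLP (j := 0) (i := 0) (by decide)) Relation.ReflTransGen.refl))))))
  · exact (Relation.ReflTransGen.head (adjPL (i := 9) (j := 22) (by decide)) (Relation.ReflTransGen.head (adjLP (j := 22) (i := 32) (by decide)) (Relation.ReflTransGen.head (adjPL (i := 32) (j := 3) (by decide)) (Relation.ReflTransGen.head (adjLP (j := 3) (i := 1) (by decide)) (Relation.ReflTransGen.head (adjPL (i := 1) (j := 0) (by decide)) (Relation.ReflTransGen.head (adjLP (j := 0) (i := 0) (by decide)) Relation.ReflTransGen.refl))))))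
  · exact (Relation.ReflTransGen.head (adjPL (i := 10) (j := 24) (by decide)) (Relation.ReflTransGen.head (adjLP (j := 24) (i := 20) (by decide)) (Relation.ReflTransGen.head (adjPL (i := 20) (j := 5) (by decide)) (Relation.ReflTransGen.head (adjLP (j := 5) (i := 2) (by decide)) (Relation.ReflTransGen.head (adjPL (i := 2) (j := 0) (by decide)) (Relation.ReflTransGen.head (adjLP (j := 0) (i := 0) (by decide)) Relation.ReflTransGen.refl))))))
  · exact (Relation.ReflTransGen.head (adjPL (i := 11) (j := 28) (by decide)) (Relation.ReflTransGen.head (adjLP (j := 28) (i := 21) (by decide)) (Relation.ReflTransGen.head (adjPL (i := 21) (j := 3) (by decide)) (Relation.ReflTransGen.head (adjLP (j := 3) (i := 1) (by decide)) (Relation.ReflTransGen.head (adjPL (i := 1) (j := 0) (by decide)) (Relation.ReflTransGen.head (adjLP (j := 0) (i := 0) (by decide)) Relation.ReflTransGen.refl))))))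
  · exact (Relation.ReflTransGen.head (adjPL (i := 12) (j := 32) (by decide)) (Relation.ReflTransGen.head (adjLP (j := 32) (i := 33) (by decide)) (Relation.ReflTransGen.head (adjPL (i := 33) (j := 5) (by decide)) (Relation.ReflTransGen.head (adjLP (j := 5) (i := 2) (by decide)) (Relation.ReflTransGen.head (adjPL (i := 2) (j := 0) (by decide)) (Relation.ReflTransGen.head (adjLP (j := 0) (i := 0) (by decide)) Relation.ReflTransGen.refl))))))
  · exact (Relation.ReflTransGen.head (adjPL (i := 13) (j := 35) (by decide)) (Relation.ReflTransGen.head (adjLP (j := 35) (i := 32) (by decide)) (Relation.ReflTransGen.head (adjPL (i := 32) (j := 3) (by decide)) (Relation.ReflTransGen.head (adjLP (j := 3) (i := 1) (by decide)) (Relation.ReflTransGen.head (adjPL (i := 1) (j := 0) (by decide)) (Relation.ReflTransGen.head (adjLP (j := 0) (i := 0) (by decide)) Relation.ReflTransGen.refl))))))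
  · exact (Relation.ReflTransGen.head (adjPL (i := 14) (j := 37) (by decide)) (Relation.ReflTransGen.head (adjLP (j := 37) (i := 20) (by decide)) (Relation.ReflTransGen.head (adjPL (i := 20) (j := 5) (by decide)) (Relation.ReflTransGen.head (adjLP (j := 5) (i := 2) (by decide)) (Relation.ReflTransGen.head (adjPL (i := 2) (j := 0) (by decide)) (Relation.ReflTransGen.head (adjLP (j := 0) (i := 0) (by decide)) Relation.ReflTransGen.refl))))))
  · exact (Relation.ReflTransGen.head (adjPL (i := 15) (j := 13) (by decide)) (Relation.ReflTransGen.head (adjLP (j := 13) (i := 6) (by decide)) (Relation.ReflTransGen.head (adjPL (i := 6) (j := 2) (by decide)) (Relation.ReflTransGen.head (adjLP (j := 2) (i := 0) (by decide)) Relation.ReflTransGen.refl))))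
  · exact (Relation.ReflTransGen.head (adjPL (i := 16) (j := 14) (by decide)) (Relation.ReflTransGen.head (adjLP (j := 14) (i := 6) (by decide)) (Relation.ReflTransGen.head (adjPL (i := 6) (j := 2) (by decide)) (Relation.ReflTransGen.head (adjLP (j := 2) (i := 0) (by decide)) Relation.ReflTransGen.refl))))
  · exact (Relation.ReflTransGen.head (adjPL (i := 17) (j := 14) (by decide)) (Relation.ReflTransGen.head (adjLP (j := 14) (i := 6) (by decide)) (Relation.ReflTransGen.head (adjPL (i := 6) (j := 2) (by decide)) (Relation.ReflTransGen.head (adjLP (j := 2) (i := 0) (by decide)) Relation.ReflTransGen.refl))))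
  · exact (Relation.ReflTransGen.head (adjPL (i := 18) (j := 13) (by decide)) (Relation.ReflTransGen.head (adjLP (j := 13) (i := 6) (by decide)) (Relation.ReflTransGen.head (adjPL (i := 6) (j := 2) (by decide)) (Relation.ReflTransGen.head (adjLP (j := 2) (i := 0) (by decide)) Relation.ReflTransGen.refl))))
  · exact (Relation.ReflTransGen.head (adjPL (i := 19) (j := 9) (by decide)) (Relation.ReflTransGen.head (adjLP (j := 9) (i := 4) (by decide)) (Relation.ReflTransGen.head (adjPL (i := 4) (j := 1) (by decide)) (Relation.ReflTransGen.head (adjLP (j := 1) (i := 0) (by decide)) Relation.ReflTransGen.refl))))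
  · exact (Relation.ReflTransGen.head (adjPL (i := 20) (j := 5) (by decide)) (Relation.ReflTransGen.head (adjLP (j := 5) (i := 2) (by decide)) (Relation.ReflTransGen.head (adjPL (i := 2) (j := 0) (by decide)) (Relation.ReflTransGen.head (adjLP (j := 0) (i := 0) (by decide)) Relation.ReflTransGen.refl))))
  · exact (Relation.ReflTransGen.head (adjPL (i := 21) (j := 3) (by decide)) (Relation.ReflTransGen.head (adjLP (j := 3) (i := 1) (by decide)) (Relation.ReflTransGen.head (adjPL (i := 1) (j := 0) (by decide)) (Relation.ReflTransGen.head (adjLP (j := 0) (i := 0) (by decide)) Relation.ReflTransGen.refl))))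
  · exact (Relation.ReflTransGen.head (adjPL (i := 22) (j := 7) (by decide)) (Relation.ReflTransGen.head (adjLP (j := 7) (i := 3) (by decide)) (Relation.ReflTransGen.head (adjPL (i := 3) (j := 1) (by decide)) (Relation.ReflTransGen.head (adjLP (j := 1) (i := 0) (by decide)) Relation.ReflTransGen.refl))))
  · exact (Relation.ReflTransGen.head (adjPL (i := 23) (j := 10) (by decide)) (Relation.ReflTransGen.head (adjLP (j := 10) (i := 4) (by decide)) (Relation.ReflTransGen.head (adjPL (i := 4) (j := 1) (by decide)) (Relation.ReflTransGen.head (adjLP (j := 1) (i := 0) (by decide)) Relation.ReflTransGen.refl))))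
  · exact (Relation.ReflTransGen.head (adjPL (i := 24) (j := 4) (by decide)) (Relation.ReflTransGen.head (adjLP (j := 4) (i := 1) (by decide)) (Relation.ReflTransGen.head (adjPL (i := 1) (j := 0) (by decide)) (Relation.ReflTransGen.head (adjLP (j := 0) (i := 0) (by decide)) Relation.ReflTransGen.refl))))
  · exact (Relation.ReflTransGen.head (adjPL (i := 25) (j := 6) (by decide)) (Relation.ReflTransGen.head (adjLP (j := 6) (i := 2) (by decide)) (Relation.ReflTransGen.head (adjPL (i := 2) (j := 0) (by decide)) (Relation.ReflTransGen.head (adjLP (j := 0) (i := 0) (by decide)) Relation.ReflTransGen.refl))))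
  · exact (Relation.ReflTransGen.head (adjPL (i := 26) (j := 8) (by decide)) (Relation.ReflTransGen.head (adjLP (j := 8) (i := 3) (by decide)) (Relation.ReflTransGen.head (adjPL (i := 3) (j := 1) (by decide)) (Relation.ReflTransGen.head (adjLP (j := 1) (i := 0) (by decide)) Relation.ReflTransGen.refl))))
  · exact (Relation.ReflTransGen.head (adjPL (i := 27) (j := 10) (by decide)) (Relation.ReflTransGen.head (adjLP (j := 10) (i := 4) (by decide)) (Relation.ReflTransGen.head (adjPL (i := 4) (j := 1) (by decide)) (Relation.ReflTransGen.head (adjLP (j := 1) (i := 0) (by decide)) Relation.ReflTransGen.refl))))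
  · exact (Relation.ReflTransGen.head (adjPL (i := 28) (j := 6) (by decide)) (Relation.ReflTransGen.head (adjLP (j := 6) (i := 2) (by decide)) (Relation.ReflTransGen.head (adjPL (i := 2) (j := 0) (by decide)) (Relation.ReflTransGen.head (adjLP (j := 0) (i := 0) (by decide)) Relation.ReflTransGen.refl))))
  · exact (Relation.ReflTransGen.head (adjPL (i := 29) (j := 4) (by decide)) (Relation.ReflTransGen.head (adjLP (j := 4) (i := 1) (by decide)) (Relation.ReflTransGen.head (adjPL (i := 1) (j := 0) (by decide)) (Relation.ReflTransGen.head (adjLP (j := 0) (i := 0) (by decide)) Relation.ReflTransGen.refl))))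
  · exact (Relation.ReflTransGen.head (adjPL (i := 30) (j := 8) (by decide)) (Relation.ReflTransGen.head (adjLP (j := 8) (i := 3) (by decide)) (Relation.ReflTransGen.head (adjPL (i := 3) (j := 1) (by decide)) (Relation.ReflTransGen.head (adjLP (j := 1) (i := 0) (by decide)) Relation.ReflTransGen.refl))))
  · exact (Relation.ReflTransGen.head (adjPL (i := 31) (j := 9) (by decide)) (Relation.ReflTransGen.head (adjLP (j := 9) (i := 4) (by decide)) (Relation.ReflTransGen.head (adjPL (i := 4) (j := 1) (by decide)) (Relation.ReflTransGen.head (adjLP (j := 1) (i := 0) (by decide)) Relation.ReflTransGen.refl))))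
  · exact (Relation.ReflTransGen.head (adjPL (i := 32) (j := 3) (by decide)) (Relation.ReflTransGen.head (adjLP (j := 3) (i := 1) (by decide)) (Relation.ReflTransGen.head (adjPL (i := 1) (j := 0) (by decide)) (Relation.ReflTransGen.head (adjLP (j := 0) (i := 0) (by decide)) Relation.ReflTransGen.refl))))
  · exact (Relation.ReflTransGen.head (adjPL (i := 33) (j := 5) (by decide)) (Relation.ReflTransGen.head (adjLP (j := 5) (i := 2) (by decide)) (Relation.ReflTransGen.head (adjPL (i := 2) (j := 0) (by decide)) (Relation.ReflTransGen.head (adjLP (j := 0) (i := 0) (by decide)) Relation.ReflTransGen.refl))))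
  · exact (Relation.ReflTransGen.head (adjPL (i := 34) (j := 7) (by decide)) (Relation.ReflTransGen.head (adjLP (j := 7) (i := 3) (by decide)) (Relation.ReflTransGen.head (adjPL (i := 3) (j := 1) (by decide)) (Relation.ReflTransGen.head (adjLP (j := 1) (i := 0) (by decide)) Relation.ReflTransGen.refl))))
  · exact (Relation.ReflTransGen.head (adjPL (i := 35) (j := 11) (by decide)) (Relation.ReflTransGen.head (adjLP (j := 11) (i := 5) (by decide)) (Relation.ReflTransGen.head (adjPL (i := 5) (j := 2) (by decide)) (Relation.ReflTransGen.head (adjLP (j := 2) (i := 0) (by decide)) Relation.ReflTransGen.refl))))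
  · exact (Relation.ReflTransGen.head (adjPL (i := 36) (j := 12) (by decide)) (Relation.ReflTransGen.head (adjLP (j := 12) (i := 5) (by decide)) (Relation.ReflTransGen.head (adjPL (i := 5) (j := 2) (by decide)) (Relation.ReflTransGen.head (adjLP (j := 2) (i := 0) (by decide)) Relation.ReflTransGen.refl))))
  · exact (Relation.ReflTransGen.head (adjPL (i := 37) (j := 12) (by decide)) (Relation.ReflTransGen.head (adjLP (j := 12) (i := 5) (by decide)) (Relation.ReflTransGen.head (adjPL (i := 5) (j := 2) (by decide)) (Relation.ReflTransGen.head (adjLP (j := 2) (i := 0) (by decide)) Relation.ReflTransGen.refl))))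
  · exact (Relation.ReflTransGen.head (adjPL (i := 38) (j := 11) (by decide)) (Relation.ReflTransGen.head (adjLP (j := 11) (i := 5) (by decide)) (Relation.ReflTransGen.head (adjPL (i := 5) (j := 2) (by decide)) (Relation.ReflTransGen.head (adjLP (j := 2) (i := 0) (by decide)) Relation.ReflTransGen.refl))))

lemma reachL : ∀ j : Fin 39, Relation.ReflTransGen Zcfg.LeviAdj (Sum.inr (lineOf j)) (Sum.inl (Ppt 0)) := by
  intro j; fin_cases j
  · exact (Relation.ReflTransGen.head (adjLP (j := 0) (i := 0) (by decide)) Relation.ReflTransGen.refl)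
  · exact (Relation.ReflTransGen.head (adjLP (j := 1) (i := 0) (by decide)) Relation.ReflTransGen.refl)
  · exact (Relation.ReflTransGen.head (adjLP (j := 2) (i := 0) (by decide)) Relation.ReflTransGen.refl)
  · exact (Relation.ReflTransGen.head (adjLP (j := 3) (i := 1) (by decide)) (Relation.ReflTransGen.head (adjPL (i := 1) (j := 0) (by decide)) (Relation.ReflTransGen.head (adjLP (j := 0) (i := 0) (by decide)) Relation.ReflTransGen.refl)))
  · exact (Relation.ReflTransGen.head (adjLP (j := 4) (i := 1) (by decide)) (Relation.ReflTransGen.head (adjPL (i := 1) (j := 0) (by decide)) (Relation.ReflTransGen.head (adjLP (j := 0) (i := 0) (by decide)) Relation.ReflTransGen.refl)))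
  · exact (Relation.ReflTransGen.head (adjLP (j := 5) (i := 2) (by decide)) (Relation.ReflTransGen.head (adjPL (i := 2) (j := 0) (by decide)) (Relation.ReflTransGen.head (adjLP (j := 0) (i := 0) (by decide)) Relation.ReflTransGen.refl)))
  · exact (Relation.ReflTransGen.head (adjLP (j := 6) (i := 2) (by decide)) (Relation.ReflTransGen.head (adjPL (i := 2) (j := 0) (by decide)) (Relation.ReflTransGen.head (adjLP (j := 0) (i := 0) (by decide)) Relation.ReflTransGen.refl)))
  · exact (Relation.ReflTransGen.head (adjLP (j := 7) (i := 3) (by decide)) (Relation.ReflTransGen.head (adjPL (i := 3) (j := 1) (by decide)) (Relation.ReflTransGen.head (adjLP (j := 1) (i := 0) (by decide)) Relation.ReflTransGen.refl)))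
  · exact (Relation.ReflTransGen.head (adjLP (j := 8) (i := 3) (by decide)) (Relation.ReflTransGen.head (adjPL (i := 3) (j := 1) (by decide)) (Relation.ReflTransGen.head (adjLP (j := 1) (i := 0) (by decide)) Relation.ReflTransGen.refl)))
  · exact (Relation.ReflTransGen.head (adjLP (j := 9) (i := 4) (by decide)) (Relation.ReflTransGen.head (adjPL (i := 4) (j := 1) (by decide)) (Relation.ReflTransGen.head (adjLP (j := 1) (i := 0) (by decide)) Relation.ReflTransGen.refl)))
  · exact (Relation.ReflTransGen.head (adjLP (j := 10) (i := 4) (by decide)) (Relation.ReflTransGen.head (adjPL (i := 4) (j := 1) (by decide)) (Relation.ReflTransGen.head (adjLP (j := 1) (i := 0) (by decide)) Relation.ReflTransGen.refl)))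
  · exact (Relation.ReflTransGen.head (adjLP (j := 11) (i := 5) (by decide)) (Relation.ReflTransGen.head (adjPL (i := 5) (j := 2) (by decide)) (Relation.ReflTransGen.head (adjLP (j := 2) (i := 0) (by decide)) Relation.ReflTransGen.refl)))
  · exact (Relation.ReflTransGen.head (adjLP (j := 12) (i := 5) (by decide)) (Relation.ReflTransGen.head (adjPL (i := 5) (j := 2) (by decide)) (Relation.ReflTransGen.head (adjLP (j := 2) (i := 0) (by decide)) Relation.ReflTransGen.refl)))
  · exact (Relation.ReflTransGen.head (adjLP (j := 13) (i := 6) (by decide)) (Relation.ReflTransGen.head (adjPL (i := 6) (j := 2) (by decide)) (Relation.ReflTransGen.head (adjLP (j := 2) (i := 0) (by decide)) Relation.ReflTransGen.refl)))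
  · exact (Relation.ReflTransGen.head (adjLP (j := 14) (i := 6) (by decide)) (Relation.ReflTransGen.head (adjPL (i := 6) (j := 2) (by decide)) (Relation.ReflTransGen.head (adjLP (j := 2) (i := 0) (by decide)) Relation.ReflTransGen.refl)))
  · exact (Relation.ReflTransGen.head (adjLP (j := 15) (i := 21) (by decide)) (Relation.ReflTransGen.head (adjPL (i := 21) (j := 3) (by decide)) (Relation.ReflTransGen.head (adjLP (j := 3) (i := 1) (by decide)) (Relation.ReflTransGen.head (adjPL (i := 1) (j := 0) (by decide)) (Relation.ReflTransGen.head (adjLP (j := 0) (i := 0) (by decide)) Relation.ReflTransGen.refl)))))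
  · exact (Relation.ReflTransGen.head (adjLP (j := 16) (i := 34) (by decide)) (Relation.ReflTransGen.head (adjPL (i := 34) (j := 7) (by decide)) (Relation.ReflTransGen.head (adjLP (j := 7) (i := 3) (by decide)) (Relation.ReflTransGen.head (adjPL (i := 3) (j := 1) (by decide)) (Relation.ReflTransGen.head (adjLP (j := 1) (i := 0) (by decide)) Relation.ReflTransGen.refl)))))
  · exact (Relation.ReflTransGen.head (adjLP (j := 17) (i := 35) (by decide)) (Relation.ReflTransGen.head (adjPL (i := 35) (j := 11) (by decide)) (Relation.ReflTransGen.head (adjLP (j := 11) (i := 5) (by decide)) (Relation.ReflTransGen.head (adjPL (i := 5) (j := 2) (by decide)) (Relation.ReflTransGen.head (adjLP (j := 2) (i := 0) (by decide)) Relation.ReflTransGen.refl)))))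
  · exact (Relation.ReflTransGen.head (adjLP (j := 18) (i := 22) (by decide)) (Relation.ReflTransGen.head (adjPL (i := 22) (j := 7) (by decide)) (Relation.ReflTransGen.head (adjLP (j := 7) (i := 3) (by decide)) (Relation.ReflTransGen.head (adjPL (i := 3) (j := 1) (by decide)) (Relation.ReflTransGen.head (adjLP (j := 1) (i := 0) (by decide)) Relation.ReflTransGen.refl)))))
  · exact (Relation.ReflTransGen.head (adjLP (j := 19) (i := 33) (by decide)) (Relation.ReflTransGen.head (adjPL (i := 33) (j := 5) (by decide)) (Relation.ReflTransGen.head (adjLP (j := 5) (i := 2) (by decide)) (Relation.ReflTransGen.head (adjPL (i := 2) (j := 0) (by decide)) (Relation.ReflTransGen.head (adjLP (j := 0) (i := 0) (by decide)) Relation.ReflTransGen.refl)))))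
  · exact (Relation.ReflTransGen.head (adjLP (j := 20) (i := 38) (by decide)) (Relation.ReflTransGen.head (adjPL (i := 38) (j := 11) (by decide)) (Relation.ReflTransGen.head (adjLP (j := 11) (i := 5) (by decide)) (Relation.ReflTransGen.head (adjPL (i := 5) (j := 2) (by decide)) (Relation.ReflTransGen.head (adjLP (j := 2) (i := 0) (by decide)) Relation.ReflTransGen.refl)))))
  · exact (Relation.ReflTransGen.head (adjLP (j := 21) (i := 19) (by decide)) (Relation.ReflTransGen.head (adjPL (i := 19) (j := 9) (by decide)) (Relation.ReflTransGen.head (adjLP (j := 9) (i := 4) (by decide)) (Relation.ReflTransGen.head (adjPL (i := 4) (j := 1) (by decide)) (Relation.ReflTransGen.head (adjLP (j := 1) (i := 0) (by decide)) Relation.ReflTransGen.refl)))))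
  · exact (Relation.ReflTransGen.head (adjLP (j := 22) (i := 32) (by decide)) (Relation.ReflTransGen.head (adjPL (i := 32) (j := 3) (by decide)) (Relation.ReflTransGen.head (adjLP (j := 3) (i := 1) (by decide)) (Relation.ReflTransGen.head (adjPL (i := 1) (j := 0) (by decide)) (Relation.ReflTransGen.head (adjLP (j := 0) (i := 0) (by decide)) Relation.ReflTransGen.refl)))))
  · exact (Relation.ReflTransGen.head (adjLP (j := 23) (i := 35) (by decide)) (Relation.ReflTransGen.head (adjPL (i := 35) (j := 11) (by decide)) (Relation.ReflTransGen.head (adjLP (j := 11) (i := 5) (by decide)) (Relation.ReflTransGen.head (adjPL (i := 5) (j := 2) (by decide)) (Relation.ReflTransGen.head (adjLP (j := 2) (i := 0) (by decide)) Relation.ReflTransGen.refl)))))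
  · exact (Relation.ReflTransGen.head (adjLP (j := 24) (i := 20) (by decide)) (Relation.ReflTransGen.head (adjPL (i := 20) (j := 5) (by decide)) (Relation.ReflTransGen.head (adjLP (j := 5) (i := 2) (by decide)) (Relation.ReflTransGen.head (adjPL (i := 2) (j := 0) (by decide)) (Relation.ReflTransGen.head (adjLP (j := 0) (i := 0) (by decide)) Relation.ReflTransGen.refl)))))
  · exact (Relation.ReflTransGen.head (adjLP (j := 25) (i := 31) (by decide)) (Relation.ReflTransGen.head (adjPL (i := 31) (j := 9) (by decide)) (Relation.ReflTransGen.head (adjLP (j := 9) (i := 4) (by decide)) (Relation.ReflTransGen.head (adjPL (i := 4) (j := 1) (by decide)) (Relation.ReflTransGen.head (adjLP (j := 1) (i := 0) (by decide)) Relation.ReflTransGen.refl)))))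
  · exact (Relation.ReflTransGen.head (adjLP (j := 26) (i := 38) (by decide)) (Relation.ReflTransGen.head (adjPL (i := 38) (j := 11) (by decide)) (Relation.ReflTransGen.head (adjLP (j := 11) (i := 5) (by decide)) (Relation.ReflTransGen.head (adjPL (i := 5) (j := 2) (by decide)) (Relation.ReflTransGen.head (adjLP (j := 2) (i := 0) (by decide)) Relation.ReflTransGen.refl)))))
  · exact (Relation.ReflTransGen.head (adjLP (j := 27) (i := 18) (by decide)) (Relation.ReflTransGen.head (adjPL (i := 18) (j := 13) (by decide)) (Relation.ReflTransGen.head (adjLP (j := 13) (i := 6) (by decide)) (Relation.ReflTransGen.head (adjPL (i := 6) (j := 2) (by decide)) (Relation.ReflTransGen.head (adjLP (j := 2) (i := 0) (by decide)) Relation.ReflTransGen.refl)))))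
  · exact (Relation.ReflTransGen.head (adjLP (j := 28) (i := 21) (by decide)) (Relation.ReflTransGen.head (adjPL (i := 21) (j := 3) (by decide)) (Relation.ReflTransGen.head (adjLP (j := 3) (i := 1) (by decide)) (Relation.ReflTransGen.head (adjPL (i := 1) (j := 0) (by decide)) (Relation.ReflTransGen.head (adjLP (j := 0) (i := 0) (by decide)) Relation.ReflTransGen.refl)))))
  · exact (Relation.ReflTransGen.head (adjLP (j := 29) (i := 34) (by decide)) (Relation.ReflTransGen.head (adjPL (i := 34) (j := 7) (by decide)) (Relation.ReflTransGen.head (adjLP (j := 7) (i := 3) (by decide)) (Relation.ReflTransGen.head (adjPL (i := 3) (j := 1) (by decide)) (Relation.ReflTransGen.head (adjLP (j := 1) (i := 0) (by decide)) Relation.ReflTransGen.refl)))))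
  · exact (Relation.ReflTransGen.head (adjLP (j := 30) (i := 15) (by decide)) (Relation.ReflTransGen.head (adjPL (i := 15) (j := 13) (by decide)) (Relation.ReflTransGen.head (adjLP (j := 13) (i := 6) (by decide)) (Relation.ReflTransGen.head (adjPL (i := 6) (j := 2) (by decide)) (Relation.ReflTransGen.head (adjLP (j := 2) (i := 0) (by decide)) Relation.ReflTransGen.refl)))))
  · exact (Relation.ReflTransGen.head (adjLP (j := 31) (i := 22) (by decide)) (Relation.ReflTransGen.head (adjPL (i := 22) (j := 7) (by decide)) (Relation.ReflTransGen.head (adjLP (j := 7) (i := 3) (by decide)) (Relation.ReflTransGen.head (adjPL (i := 3) (j := 1) (by decide)) (Relation.ReflTransGen.head (adjLP (j := 1) (i := 0) (by decide)) Relation.ReflTransGen.refl)))))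
  · exact (Relation.ReflTransGen.head (adjLP (j := 32) (i := 33) (by decide)) (Relation.ReflTransGen.head (adjPL (i := 33) (j := 5) (by decide)) (Relation.ReflTransGen.head (adjLP (j := 5) (i := 2) (by decide)) (Relation.ReflTransGen.head (adjPL (i := 2) (j := 0) (by decide)) (Relation.ReflTransGen.head (adjLP (j := 0) (i := 0) (by decide)) Relation.ReflTransGen.refl)))))
  · exact (Relation.ReflTransGen.head (adjLP (j := 33) (i := 18) (by decide)) (Relation.ReflTransGen.head (adjPL (i := 18) (j := 13) (by decide)) (Relation.ReflTransGen.head (adjLP (j := 13) (i := 6) (by decide)) (Relation.ReflTransGen.head (adjPL (i := 6) (j := 2) (by decide)) (Relation.ReflTransGen.head (adjLP (j := 2) (i := 0) (by decide)) Relation.ReflTransGen.refl)))))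
  · exact (Relation.ReflTransGen.head (adjLP (j := 34) (i := 19) (by decide)) (Relation.ReflTransGen.head (adjPL (i := 19) (j := 9) (by decide)) (Relation.ReflTransGen.head (adjLP (j := 9) (i := 4) (by decide)) (Relation.ReflTransGen.head (adjPL (i := 4) (j := 1) (by decide)) (Relation.ReflTransGen.head (adjLP (j := 1) (i := 0) (by decide)) Relation.ReflTransGen.refl)))))
  · exact (Relation.ReflTransGen.head (adjLP (j := 35) (i := 32) (by decide)) (Relation.ReflTransGen.head (adjPL (i := 32) (j := 3) (by decide)) (Relation.ReflTransGen.head (adjLP (j := 3) (i := 1) (by decide)) (Relation.ReflTransGen.head (adjPL (i := 1) (j := 0) (by decide)) (Relation.ReflTransGen.head (adjLP (j := 0) (i := 0) (by decide)) Relation.ReflTransGen.refl)))))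
  · exact (Relation.ReflTransGen.head (adjLP (j := 36) (i := 15) (by decide)) (Relation.ReflTransGen.head (adjPL (i := 15) (j := 13) (by decide)) (Relation.ReflTransGen.head (adjLP (j := 13) (i := 6) (by decide)) (Relation.ReflTransGen.head (adjPL (i := 6) (j := 2) (by decide)) (Relation.ReflTransGen.head (adjLP (j := 2) (i := 0) (by decide)) Relation.ReflTransGen.refl)))))
  · exact (Relation.ReflTransGen.head (adjLP (j := 37) (i := 20) (by decide)) (Relation.ReflTransGen.head (adjPL (i := 20) (j := 5) (by decide)) (Relation.ReflTransGen.head (adjLP (j := 5) (i := 2) (by decide)) (Relation.ReflTransGen.head (adjPL (i := 2) (j := 0) (by decide)) (Relation.ReflTransGen.head (adjLP (j := 0) (i := 0) (by decide)) Relation.ReflTransGen.refl)))))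
  · exact (Relation.ReflTransGen.head (adjLP (j := 38) (i := 31) (by decide)) (Relation.ReflTransGen.head (adjPL (i := 31) (j := 9) (by decide)) (Relation.ReflTransGen.head (adjLP (j := 9) (i := 4) (by decide)) (Relation.ReflTransGen.head (adjPL (i := 4) (j := 1) (by decide)) (Relation.ReflTransGen.head (adjLP (j := 1) (i := 0) (by decide)) Relation.ReflTransGen.refl)))))

lemma leviSymm : Symmetric Zcfg.LeviAdj := by
  rintro (p | l) (p' | l') h <;> exact h

lemma Zconnected : Zcfg.Connected := by
  have hsymm : Symmetric (Relation.ReflTransGen Zcfg.LeviAdj) := fun x y => (@Relation.ReflTransGen.symmetric _ _ ⟨fun a b h => leviSymm h⟩).symm x y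
  intro a b ha hb
  have ra : ∀ c, Zcfg.LeviVert c → Relation.ReflTransGen Zcfg.LeviAdj c (Sum.inl (Ppt 0)) := by
    rintro (p | l) hc
    · change p ∈ Set.range Ppt at hc
      obtain ⟨i, rfl⟩ := hc
      exact reachP i
    · change l ∈ Set.range lineOf at hc
      obtain ⟨i, rfl⟩ := hc
      exact reachL i
  exact (ra a ha).trans (hsymm (ra b hb))


def upt (v : Z3) : E3 := pt (v.1 : ℝ) (v.2.1 : ℝ) (v.2.2 : ℝ)

def add3 (a b : Z3) : Z3 := (a.1 + b.1, a.2.1 + b.2.1, a.2.2 + b.2.2)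
def appR (u : Z3 × Z3 × Z3) (x : Z3) : Z3 :=
  (x.1 * u.1.1 + x.2.1 * u.2.1.1 + x.2.2 * u.2.2.1,
   x.1 * u.1.2.1 + x.2.1 * u.2.1.2.1 + x.2.2 * u.2.2.2.1,
   x.1 * u.1.2.2 + x.2.1 * u.2.1.2.2 + x.2.2 * u.2.2.2.2)
def detZ (u : Z3 × Z3 × Z3) : ℤ :=
  u.1.1 * (u.2.1.2.1 * u.2.2.2.2 - u.2.1.2.2 * u.2.2.2.1)
  - u.2.1.1 * (u.1.2.1 * u.2.2.2.2 - u.1.2.2 * u.2.2.2.1)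
  + u.2.2.1 * (u.1.2.1 * u.2.1.2.2 - u.1.2.2 * u.2.1.2.1)
def sq3 (x : Z3) : ℤ := x.1 * x.1 + x.2.1 * x.2.1 + x.2.2 * x.2.2
def mul3 (n : ℤ) (x : Z3) : Z3 := (n * x.1, n * x.2.1, n * x.2.2)
def axesF : Fin 6 → Z3 := ![(1,0,0), (-1,0,0), (0,1,0), (0,-1,0), (0,0,1), (0,0,-1)]
def nonpar (a b : Z3) : Prop := a ≠ b ∧ a ≠ mul3 (-1) b
instance (a b : Z3) : Decidable (nonpar a b) := by unfold nonpar; infer_instance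

lemma ipt_add (a b : Z3) : ipt (add3 a b) = ipt a + ipt b := by
  rw [ipt, ipt, ipt, pt_add, pt_inj]
  refine ⟨?_, ?_, ?_⟩ <;> (unfold add3; push_cast; ring)

lemma ipt_sub (a b : Z3) : ipt (sub3 a b) = ipt a - ipt b := by
  rw [ipt, ipt, ipt, pt_sub, pt_inj]
  refine ⟨?_, ?_, ?_⟩ <;> (unfold sub3; push_cast; ring)

lemma pt_zero : pt 0 0 0 = (0 : E3) := by
  ext i; fin_cases i <;> simp [pt]

lemma ipt_zero : ipt ((0 : ℤ), (0 : ℤ), (0 : ℤ)) = (0 : E3) := by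
  rw [ipt, ← pt_zero, pt_inj]; norm_num

def iptHom : Z3 →+ E3 where
  toFun := ipt
  map_zero' := ipt_zero
  map_add' a b := by
    have h : ipt (a + b) = ipt a + ipt b := ipt_add a b
    exact h

lemma upt_inj {a b : Z3} (h : upt a = upt b) : a = b := by
  obtain ⟨a1, a2, a3⟩ := a; obtain ⟨b1, b2, b3⟩ := b
  rw [upt, upt, pt_inj] at h
  obtain ⟨h1, h2, h3⟩ := h
  simp only [Prod.mk.injEq]
  exact ⟨by exact_mod_cast h1, by exact_mod_cast h2, by exact_mod_cast h3⟩

lemma upt_neg (v : Z3) : upt (mul3 (-1) v) = - upt v := by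
  rw [upt, upt, show -pt ((v.1:ℝ)) ((v.2.1:ℝ)) ((v.2.2:ℝ)) = (-1 : ℝ) • pt ((v.1:ℝ)) ((v.2.1:ℝ)) ((v.2.2:ℝ)) by module, pt_smul, pt_inj]
  refine ⟨?_, ?_, ?_⟩ <;> (unfold mul3; push_cast; ring)

lemma norm_ipt_sq (x : Z3) : ‖ipt x‖^2 = ((sq3 x : ℤ) : ℝ)/25 := by
  rw [EuclideanSpace.norm_eq, Real.sq_sqrt (by positivity)]
  simp only [Fin.sum_univ_three, Real.norm_eq_abs, sq_abs]
  unfold ipt pt sq3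
  push_cast
  norm_num [Matrix.cons_val_zero, Matrix.cons_val_one]
  ring

lemma norm_ipt_eq {x : Z3} {r : ℝ} (hr : 0 ≤ r) :
    ‖ipt x‖ = r ↔ ((sq3 x : ℤ) : ℝ) = 25 * r^2 := by
  constructor
  · intro h
    have := norm_ipt_sq x
    rw [h] at this
    linarith
  · intro h
    have h2 : ‖ipt x‖^2 = r^2 := by rw [norm_ipt_sq, h]; ring
    calc ‖ipt x‖ = Real.sqrt (‖ipt x‖^2) := (Real.sqrt_sq (norm_nonneg _)).symm
    _ = Real.sqrt (r^2) := by rw [h2]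
    _ = r := Real.sqrt_sq hr

-- decide facts for symmetry
set_option maxRecDepth 40000
lemma d_rotP : ∀ k : Fin 24, ∀ i : Fin 39, appR (Rdat k) (Pdat i) = Pdat (rotP k i) := by decide
lemma d_rotLi : ∀ k : Fin 24, ∀ i : Fin 39,
    onLP (rotL k i) (rotP k (Ldat i).1) ∧ onLP (rotL k i) (rotP k (Ldat i).2) := by decide
lemma d_reflwit : ∀ k : Fin 24, ∀ j : Fin 39, appR (Fdat k) (Pdat (wit k)) ≠ Pdat j := by decide
lemma d_class : ∀ a b c : Fin 6, nonpar (axesF a) (axesF b) → nonpar (axesF a) (axesF c) →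
    nonpar (axesF b) (axesF c) →
    (∃ k : Fin 24, Rdat k = (axesF a, axesF b, axesF c)) ∨
    (∃ k : Fin 24, Fdat k = (axesF a, axesF b, axesF c)) := by decide
lemma d_rdet : ∀ k : Fin 24, detZ (Rdat k) = 1 := by decide
lemma d_fdet : ∀ k : Fin 24, detZ (Fdat k) = -1 := by decide
lemma d_vz : ∀ i : Fin 39, sq3 (Pdat i) = 75 ↔ ∃ v : Fin 8, Pdat i = VZ v := by decide
lemma d_vz_mem : ∀ v : Fin 8, ∃ i : Fin 39, Pdat i = VZ v := by decide
lemma d_vz75 : ∀ v : Fin 8, sq3 (VZ v) = 75 := by decide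
lemma d_dist2 : ∀ v w : Fin 8, sq3 (sub3 (VZ v) (VZ w)) = 100 →
    ∃ s : Fin 6, sub3 (VZ v) (VZ w) = mul3 10 (axesF s) := by decide
lemma d_sum_pdat : Finset.univ.sum Pdat = ((0:ℤ), (0:ℤ), (0:ℤ)) := by decide
lemma d_sum_vz : Finset.univ.sum VZ = ((0:ℤ), (0:ℤ), (0:ℤ)) := by decide

lemma image_lineThrough (F : E3 ≃ₗᵢ[ℝ] E3) (p q : E3) :
    F '' lineThrough p q = lineThrough (F p) (F q) := by
  ext z
  constructor
  · rintro ⟨x, ⟨t, rfl⟩, rfl⟩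
    exact ⟨t, by simp [map_add, map_smul, map_sub]⟩
  · rintro ⟨t, rfl⟩
    exact ⟨p + t • (q - p), ⟨t, rfl⟩, by simp [map_add, map_smul, map_sub]⟩

lemma lift_lemma {F : E3 ≃ₗᵢ[ℝ] E3} {u : Z3 × Z3 × Z3}
    (h1 : F (pt 1 0 0) = upt u.1) (h2 : F (pt 0 1 0) = upt u.2.1)
    (h3 : F (pt 0 0 1) = upt u.2.2) (x : Z3) :
    F (ipt x) = ipt (appR u x) := by
  have hx : ipt x = ((x.1:ℝ)/5) • pt 1 0 0 + ((x.2.1:ℝ)/5) • pt 0 1 0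
      + ((x.2.2:ℝ)/5) • pt 0 0 1 := by
    rw [pt_smul, pt_smul, pt_smul, pt_add, pt_add]
    rw [ipt, pt_inj]
    norm_num
  rw [hx, map_add, map_add, map_smul, map_smul, map_smul, h1, h2, h3]
  rw [upt, upt, upt, pt_smul, pt_smul, pt_smul, pt_add, pt_add, ipt, pt_inj]
  refine ⟨?_, ?_, ?_⟩ <;> (unfold appR; push_cast; ring)

lemma upt_apply0 (v : Z3) : (upt v) 0 = (v.1 : ℝ) := rfl
lemma upt_apply1 (v : Z3) : (upt v) 1 = (v.2.1 : ℝ) := rfl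
lemma upt_apply2 (v : Z3) : (upt v) 2 = (v.2.2 : ℝ) := rfl

lemma det_of_basis {F : E3 ≃ₗᵢ[ℝ] E3} {u : Z3 × Z3 × Z3}
    (h1 : F (pt 1 0 0) = upt u.1) (h2 : F (pt 0 1 0) = upt u.2.1)
    (h3 : F (pt 0 0 1) = upt u.2.2) :
    LinearMap.det (F.toLinearEquiv : E3 →ₗ[ℝ] E3) = ((detZ u : ℤ) : ℝ) := by
  classical
  set b : Module.Basis (Fin 3) ℝ E3 := PiLp.basisFun 2 ℝ (Fin 3) with hb
  have hb0 : b 0 = pt 1 0 0 := by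
    ext j; fin_cases j <;> simp [hb, PiLp.basisFun_apply, pt, Pi.single]
  have hb1 : b 1 = pt 0 1 0 := by
    ext j; fin_cases j <;> simp [hb, PiLp.basisFun_apply, pt, Pi.single]
  have hb2 : b 2 = pt 0 0 1 := by
    ext j; fin_cases j <;> simp [hb, PiLp.basisFun_apply, pt, Pi.single]
  rw [← LinearMap.det_toMatrix b]
  have hm : ∀ i j, LinearMap.toMatrix b b (F.toLinearEquiv : E3 →ₗ[ℝ] E3) i j
      = (F (b j)) i := by
    intro i j
    rw [LinearMap.toMatrix_apply]
    have : ((F.toLinearEquiv : E3 →ₗ[ℝ] E3) (b j)) = F (b j) := rfl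
    rw [this, hb]
    exact PiLp.basisFun_repr 2 ℝ (Fin 3) _ _
  rw [Matrix.det_fin_three, hm, hm, hm, hm, hm, hm, hm, hm, hm,
    hb0, hb1, hb2, h1, h2, h3,
    upt_apply0, upt_apply1, upt_apply2, upt_apply0, upt_apply1, upt_apply2,
    upt_apply0, upt_apply1, upt_apply2]
  unfold detZ
  push_cast
  ring

lemma VCeq : VC = Set.range (fun v : Fin 8 => ipt (VZ v)) := by
  ext p
  simp only [VC, sgn, Set.mem_insert_iff, Set.mem_singleton_iff, Set.mem_setOf_eq,
    Set.mem_range]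
  constructor
  · rintro ⟨a, (rfl | rfl), b, (rfl | rfl), c, (rfl | rfl), rfl⟩
    · exact ⟨7, by show ipt (((-5:ℤ), (-5:ℤ), (-5:ℤ)) : Z3) = _; rw [ipt, pt_inj]; norm_num⟩
    · exact ⟨6, by show ipt (((-5:ℤ), (-5:ℤ), (5:ℤ)) : Z3) = _; rw [ipt, pt_inj]; norm_num⟩
    · exact ⟨5, by show ipt (((-5:ℤ), (5:ℤ), (-5:ℤ)) : Z3) = _; rw [ipt, pt_inj]; norm_num⟩
    · exact ⟨4, by show ipt (((-5:ℤ), (5:ℤ), (5:ℤ)) : Z3) = _; rw [ipt, pt_inj]; norm_num⟩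
    · exact ⟨3, by show ipt (((5:ℤ), (-5:ℤ), (-5:ℤ)) : Z3) = _; rw [ipt, pt_inj]; norm_num⟩
    · exact ⟨2, by show ipt (((5:ℤ), (-5:ℤ), (5:ℤ)) : Z3) = _; rw [ipt, pt_inj]; norm_num⟩
    · exact ⟨1, by show ipt (((5:ℤ), (5:ℤ), (-5:ℤ)) : Z3) = _; rw [ipt, pt_inj]; norm_num⟩
    · exact ⟨0, by show ipt (((5:ℤ), (5:ℤ), (5:ℤ)) : Z3) = _; rw [ipt, pt_inj]; norm_num⟩
  · rintro ⟨v, rfl⟩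
    fin_cases v
    · exact ⟨1, Or.inr rfl, 1, Or.inr rfl, 1, Or.inr rfl, by show ipt (((5:ℤ), (5:ℤ), (5:ℤ)) : Z3) = _; rw [ipt, pt_inj]; norm_num⟩
    · exact ⟨1, Or.inr rfl, 1, Or.inr rfl, (-1), Or.inl rfl, by show ipt (((5:ℤ), (5:ℤ), (-5:ℤ)) : Z3) = _; rw [ipt, pt_inj]; norm_num⟩
    · exact ⟨1, Or.inr rfl, (-1), Or.inl rfl, 1, Or.inr rfl, by show ipt (((5:ℤ), (-5:ℤ), (5:ℤ)) : Z3) = _; rw [ipt, pt_inj]; norm_num⟩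
    · exact ⟨1, Or.inr rfl, (-1), Or.inl rfl, (-1), Or.inl rfl, by show ipt (((5:ℤ), (-5:ℤ), (-5:ℤ)) : Z3) = _; rw [ipt, pt_inj]; norm_num⟩
    · exact ⟨(-1), Or.inl rfl, 1, Or.inr rfl, 1, Or.inr rfl, by show ipt (((-5:ℤ), (5:ℤ), (5:ℤ)) : Z3) = _; rw [ipt, pt_inj]; norm_num⟩
    · exact ⟨(-1), Or.inl rfl, 1, Or.inr rfl, (-1), Or.inl rfl, by show ipt (((-5:ℤ), (5:ℤ), (-5:ℤ)) : Z3) = _; rw [ipt, pt_inj]; norm_num⟩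
    · exact ⟨(-1), Or.inl rfl, (-1), Or.inl rfl, 1, Or.inr rfl, by show ipt (((-5:ℤ), (-5:ℤ), (5:ℤ)) : Z3) = _; rw [ipt, pt_inj]; norm_num⟩
    · exact ⟨(-1), Or.inl rfl, (-1), Or.inl rfl, (-1), Or.inl rfl, by show ipt (((-5:ℤ), (-5:ℤ), (-5:ℤ)) : Z3) = _; rw [ipt, pt_inj]; norm_num⟩

lemma extract_one {F : E3 ≃ₗᵢ[ℝ] E3} (hVC : F '' VC = VC) (v w : Fin 8) (p : E3)
    (hp : p = (2⁻¹ : ℝ) • (ipt (VZ v) - ipt (VZ w)))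
    (hn : sq3 (sub3 (VZ v) (VZ w)) = 100) :
    ∃ s : Fin 6, F p = upt (axesF s) := by
  have hmem : ∀ z : Fin 8, ∃ a : Fin 8, ipt (VZ a) = F (ipt (VZ z)) := by
    intro z
    have h1 : F (ipt (VZ z)) ∈ VC := by
      rw [← hVC]
      exact ⟨ipt (VZ z), by rw [VCeq]; exact ⟨z, rfl⟩, rfl⟩
    rw [VCeq] at h1
    exact h1
  obtain ⟨a, ha⟩ := hmem v
  obtain ⟨b, hb⟩ := hmem w
  have hnorm2 : ‖ipt (sub3 (VZ v) (VZ w))‖ = 2 := by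
    rw [norm_ipt_eq (by norm_num : (0:ℝ) ≤ 2), hn]
    norm_num
  have hnorm : ‖ipt (sub3 (VZ a) (VZ b))‖ = 2 := by
    rw [ipt_sub, ha, hb, ← map_sub]
    rw [F.norm_map, ← ipt_sub]
    exact hnorm2
  have hsq : sq3 (sub3 (VZ a) (VZ b)) = 100 := by
    rw [norm_ipt_eq (by norm_num : (0:ℝ) ≤ 2)] at hnorm
    have : ((sq3 (sub3 (VZ a) (VZ b)) : ℤ) : ℝ) = 100 := by rw [hnorm]; norm_num
    exact_mod_cast this
  obtain ⟨s, hs⟩ := d_dist2 a b hsq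
  refine ⟨s, ?_⟩
  have key : F p = (2⁻¹ : ℝ) • ipt (sub3 (VZ a) (VZ b)) := by
    rw [hp, map_smul, map_sub, ← ha, ← hb, ← ipt_sub]
  rw [key, hs]
  obtain ⟨u1, u2, u3⟩ := axesF s
  rw [show mul3 10 ((u1, u2, u3) : Z3) = ((10*u1, 10*u2, 10*u3) : Z3) from rfl, ipt, pt_smul, upt, pt_inj]
  refine ⟨?_, ?_, ?_⟩ <;> (push_cast; ring)

lemma nonpar_of {F : E3 ≃ₗᵢ[ℝ] E3} {p q : E3} {α β : Z3}
    (ha : F p = upt α) (hb : F q = upt β) (h1 : p ≠ q) (h2 : p ≠ -q) : nonpar α β := by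
  constructor
  · intro h
    apply h1
    apply F.injective
    rw [ha, hb, h]
  · intro h
    apply h2
    apply F.injective
    rw [ha, map_neg, hb, h, upt_neg]

lemma preserves_of_rot {F : E3 ≃ₗᵢ[ℝ] E3} (k : Fin 24)
    (hF : ∀ x : Z3, F (ipt x) = ipt (appR (Rdat k) x)) :
    F '' Zcfg.pts = Zcfg.pts ∧ ∀ l ∈ Zcfg.lns, F '' l ∈ Zcfg.lns := by
  have hFP : ∀ i : Fin 39, F (Ppt i) = Ppt (rotP k i) := by
    intro i
    rw [Ppt, hF, d_rotP, Ppt]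
  constructor
  · apply Set.eq_of_subset_of_ncard_le
    · rintro x ⟨y, ⟨i, rfl⟩, rfl⟩
      exact ⟨rotP k i, (hFP i).symm⟩
    · rw [Set.ncard_image_of_injective _ F.injective]
    · exact Zcfg.pts_finite
  · rintro l ⟨i, rfl⟩
    have himg : F '' lineOf i
        = lineThrough (Ppt (rotP k (Ldat i).1)) (Ppt (rotP k (Ldat i).2)) := by
      rw [lineOf, image_lineThrough, hFP, hFP]
    refine ⟨rotL k i, ?_⟩
    rw [himg, lineOf]
    symm
    apply lineThrough_eq_of_mem (ppt_endpts_ne (rotL k i))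
    · exact mem_lineOf.2 (d_rotLi k i).1
    · exact mem_lineOf.2 (d_rotLi k i).2
    · rw [← hFP, ← hFP]
      exact fun h => ppt_endpts_ne i (F.injective h)

lemma pt_neg (a b c : ℝ) : -pt a b c = pt (-a) (-b) (-c) := by
  ext i; fin_cases i <;> simp [pt]

set_option maxRecDepth 40000 in
lemma d_vz_inj : Function.Injective VZ := by decide

open Classical in
def ptsFin : Finset E3 := Finset.univ.image Ppt

open Classical in
lemma Zpts_coe : Zcfg.pts = ↑ptsFin := by
  rw [Zpts, ← Set.image_univ, ptsFin, Finset.coe_image, Finset.coe_univ]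

open Classical in
lemma ptsFin_card : ptsFin.card = 39 := by
  rw [ptsFin, Finset.card_image_of_injective _ ppt_inj, Finset.card_univ, Fintype.card_fin]

open Classical in
lemma sum_ptsFin : (∑ x ∈ ptsFin, x) = (0 : E3) := by
  rw [ptsFin, Finset.sum_image (fun x _ y _ h => ppt_inj h)]
  have h1 : ∑ i : Fin 39, Ppt i = iptHom (∑ i : Fin 39, Pdat i) := by
    rw [map_sum]; rfl
  rw [h1, d_sum_pdat]
  exact map_zero iptHom

open Classical in
def vcFin : Finset E3 := Finset.univ.image (fun v : Fin 8 => ipt (VZ v))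

open Classical in
lemma VC_coe : VC = ↑vcFin := by
  rw [VCeq, ← Set.image_univ, vcFin, Finset.coe_image, Finset.coe_univ]

open Classical in
lemma vcFin_card : vcFin.card = 8 := by
  have hinj : Function.Injective (fun v : Fin 8 => ipt (VZ v)) :=
    fun x y h => d_vz_inj (ipt_inj h)
  rw [vcFin, Finset.card_image_of_injective _ hinj, Finset.card_univ, Fintype.card_fin]

open Classical in
lemma sum_vcFin : (∑ x ∈ vcFin, x) = (0 : E3) := by
  rw [vcFin, Finset.sum_image (fun x _ y _ h => d_vz_inj (ipt_inj h))]
  have h1 : ∑ v : Fin 8, ipt (VZ v) = iptHom (∑ v : Fin 8, VZ v) := by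
    rw [map_sum]; rfl
  rw [h1, d_sum_vz]
  exact map_zero iptHom

lemma trans_zero {g : E3 ≃ᵢ E3} {f : E3 ≃ₗᵢ[ℝ] E3} {b : E3} (hgx : ∀ x, g x = f x + b)
    {s : Finset E3} (hs : ∑ x ∈ s, x = 0) (himg : ⇑g '' ↑s = ↑s) (hcard : s.card ≠ 0) :
    b = 0 := by
  classical
  have h1 : Finset.image (⇑g) s = s :=
    Finset.coe_injective (by rw [Finset.coe_image]; exact himg)
  have h2 : ∑ x ∈ s, g x = 0 := by
    have h3 := Finset.sum_image (s := s) (g := (⇑g : E3 → E3)) (f := fun x : E3 => x)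
      (fun x _ y _ h => g.injective h)
    rw [h1, hs] at h3
    exact h3.symm
  have h4 : ∑ x ∈ s, g x = (s.card : ℕ) • b := by
    calc ∑ x ∈ s, g x = ∑ x ∈ s, (f x + b) := by simp only [hgx]
    _ = (∑ x ∈ s, f x) + s.card • b := by rw [Finset.sum_add_distrib, Finset.sum_const]
    _ = f (∑ x ∈ s, x) + s.card • b := by rw [map_sum]
    _ = (s.card : ℕ) • b := by rw [hs, map_zero, zero_add]
  rw [h4, ← Nat.cast_smul_eq_nsmul ℝ] at h2
  rcases smul_eq_zero.1 h2 with h | h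
  · exact absurd (by exact_mod_cast h : s.card = 0) hcard
  · exact h

lemma VC_char : VC = {p | p ∈ Zcfg.pts ∧ ‖p‖ = Real.sqrt 3} := by
  have hs3 : (0:ℝ) ≤ Real.sqrt 3 := Real.sqrt_nonneg 3
  have h25 : 25 * (Real.sqrt 3)^2 = (75:ℝ) := by
    rw [Real.sq_sqrt (by norm_num : (0:ℝ) ≤ 3)]; norm_num
  ext p
  constructor
  · intro hp
    rw [VCeq] at hp
    obtain ⟨v, rfl⟩ := hp
    obtain ⟨i, hi⟩ := d_vz_mem v
    refine ⟨⟨i, by rw [Ppt, hi]⟩, ?_⟩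
    rw [norm_ipt_eq hs3, h25]
    exact_mod_cast d_vz75 v
  · rintro ⟨⟨i, rfl⟩, hn⟩
    rw [Ppt, norm_ipt_eq hs3, h25] at hn
    obtain ⟨v, hv⟩ := (d_vz i).1 (by exact_mod_cast hn)
    rw [VCeq]
    exact ⟨v, by rw [Ppt, hv]⟩

lemma extract_units {F : E3 ≃ₗᵢ[ℝ] E3} (hVC : ⇑F '' VC = VC) :
    ∃ a b c : Fin 6, (F (pt 1 0 0) = upt (axesF a) ∧ F (pt 0 1 0) = upt (axesF b) ∧
      F (pt 0 0 1) = upt (axesF c)) ∧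
      ((∃ k : Fin 24, Rdat k = (axesF a, axesF b, axesF c)) ∨
       (∃ k : Fin 24, Fdat k = (axesF a, axesF b, axesF c))) := by
  obtain ⟨a, ha⟩ := extract_one hVC 0 4 (pt 1 0 0)
    (by rw [← ipt_sub, show sub3 (VZ 0) (VZ 4) = ((10:ℤ), (0:ℤ), (0:ℤ)) from rfl, ipt,
          pt_smul, pt_inj]; norm_num)
    (by decide)
  obtain ⟨b, hb⟩ := extract_one hVC 0 2 (pt 0 1 0)
    (by rw [← ipt_sub, show sub3 (VZ 0) (VZ 2) = ((0:ℤ), (10:ℤ), (0:ℤ)) from rfl, ipt,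
          pt_smul, pt_inj]; norm_num)
    (by decide)
  obtain ⟨c, hc⟩ := extract_one hVC 0 1 (pt 0 0 1)
    (by rw [← ipt_sub, show sub3 (VZ 0) (VZ 1) = ((0:ℤ), (0:ℤ), (10:ℤ)) from rfl, ipt,
          pt_smul, pt_inj]; norm_num)
    (by decide)
  have hne : ∀ (x y z u v w : ℝ), pt x y z = pt u v w → x = u ∧ y = v ∧ z = w :=
    fun _ _ _ _ _ _ h => pt_inj.1 h
  refine ⟨a, b, c, ⟨ha, hb, hc⟩, d_class a b c ?_ ?_ ?_⟩
  · refine nonpar_of ha hb ?_ ?_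
    · intro h; obtain ⟨h1, -, -⟩ := pt_inj.1 h; norm_num at h1
    · rw [pt_neg]; intro h; obtain ⟨h1, -, -⟩ := pt_inj.1 h; norm_num at h1
  · refine nonpar_of ha hc ?_ ?_
    · intro h; obtain ⟨h1, -, -⟩ := pt_inj.1 h; norm_num at h1
    · rw [pt_neg]; intro h; obtain ⟨h1, -, -⟩ := pt_inj.1 h; norm_num at h1
  · refine nonpar_of hb hc ?_ ?_
    · intro h; obtain ⟨-, h1, -⟩ := pt_inj.1 h; norm_num at h1
    · rw [pt_neg]; intro h; obtain ⟨-, h1, -⟩ := pt_inj.1 h; norm_num at h1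

end Aux

open Aux in
/-- Problem 6 of the paper: a connected (39_3) configuration of points and lines in ℝ³ whose symmetry group is the rotation group of the cube. -/
theorem cubical_rotational_39_3 :
    ∃ Z : PLConfig, Z.IsBalanced 39 3 ∧ Z.Connected ∧
      ∀ g : E3 ≃ᵢ E3, Preserves g Z ↔ (OrientationPreserving g ∧ g '' VC = VC) := by
  refine ⟨Zcfg, Zbalanced, Zconnected, ?_⟩
  intro g
  constructor
  · intro hgZ
    obtain ⟨hpts, hlns⟩ := hgZ
    have hg0 : g 0 = 0 := by
      have himg : ⇑g '' ↑ptsFin = ↑ptsFin := by rw [← Zpts_coe]; exact hpts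
      exact trans_zero (g := g) (f := g.toRealLinearIsometryEquiv) (b := g 0)
        (fun x => by rw [IsometryEquiv.toRealLinearIsometryEquiv_apply]; abel)
        sum_ptsFin himg (by rw [ptsFin_card]; norm_num)
    set F := g.toRealLinearIsometryEquivOfMapZero hg0 with hFdef
    have hFg : ⇑F = ⇑g := IsometryEquiv.coe_toRealLinearIsometryEquivOfMapZero g hg0
    have hFpts : ⇑F '' Zcfg.pts = Zcfg.pts := by rw [hFg]; exact hpts
    have hmemiff : ∀ x, F x ∈ Zcfg.pts ↔ x ∈ Zcfg.pts := by
      intro x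
      constructor
      · intro hx
        rw [← hFpts] at hx
        obtain ⟨y, hy, hyx⟩ := hx
        rwa [← F.injective hyx]
      · intro hx
        rw [← hFpts]
        exact ⟨x, hx, rfl⟩
    have hFVC : ⇑F '' VC = VC := by
      rw [VC_char]
      ext p
      constructor
      · rintro ⟨q, ⟨hq1, hq2⟩, rfl⟩
        exact ⟨(hmemiff q).2 hq1, by rw [F.norm_map, hq2]⟩
      · rintro ⟨hp1, hp2⟩
        refine ⟨F.symm p, ⟨?_, ?_⟩, F.apply_symm_apply p⟩
        · have h := (hmemiff (F.symm p)).1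
          rw [F.apply_symm_apply] at h
          exact h hp1
        · rw [← F.apply_symm_apply p, F.norm_map] at hp2
          exact hp2
    obtain ⟨a, b, c, ⟨ha, hb, hc⟩, hcl⟩ := extract_units hFVC
    rcases hcl with ⟨k, hk⟩ | ⟨k, hk⟩
    · have h1 : F (pt 1 0 0) = upt (Rdat k).1 := by rw [hk]; exact ha
      have h2 : F (pt 0 1 0) = upt (Rdat k).2.1 := by rw [hk]; exact hb
      have h3 : F (pt 0 0 1) = upt (Rdat k).2.2 := by rw [hk]; exact hc
      refine ⟨⟨F, 0, ?_, fun x => by rw [← hFg, add_zero]⟩, by rw [← hFg]; exact hFVC⟩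
      rw [det_of_basis h1 h2 h3, d_rdet k]
      norm_num
    · exfalso
      have h1 : F (pt 1 0 0) = upt (Fdat k).1 := by rw [hk]; exact ha
      have h2 : F (pt 0 1 0) = upt (Fdat k).2.1 := by rw [hk]; exact hb
      have h3 : F (pt 0 0 1) = upt (Fdat k).2.2 := by rw [hk]; exact hc
      have hw : F (Ppt (wit k)) = ipt (appR (Fdat k) (Pdat (wit k))) := by
        rw [Ppt]
        exact lift_lemma h1 h2 h3 _
      have hmem : F (Ppt (wit k)) ∈ Zcfg.pts := (hmemiff _).2 ⟨wit k, rfl⟩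
      rw [hw] at hmem
      obtain ⟨j, hj⟩ := (hmem : _ ∈ Set.range Ppt)
      exact d_reflwit k j (ipt_inj hj).symm
  · rintro ⟨⟨f, b, hdet, hgx⟩, hVC⟩
    have hb0 : b = 0 := by
      have himg : ⇑g '' ↑vcFin = ↑vcFin := by rw [← VC_coe]; exact hVC
      exact trans_zero hgx sum_vcFin himg (by rw [vcFin_card]; norm_num)
    have hgfs : (⇑g : E3 → E3) = ⇑f := funext fun x => by rw [hgx, hb0, add_zero]
    have hfVC : ⇑f '' VC = VC := by rw [← hgfs]; exact hVC
    obtain ⟨a, b', c, ⟨ha, hb', hc⟩, hcl⟩ := extract_units hfVC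
    rcases hcl with ⟨k, hk⟩ | ⟨k, hk⟩
    · have h1 : f (pt 1 0 0) = upt (Rdat k).1 := by rw [hk]; exact ha
      have h2 : f (pt 0 1 0) = upt (Rdat k).2.1 := by rw [hk]; exact hb'
      have h3 : f (pt 0 0 1) = upt (Rdat k).2.2 := by rw [hk]; exact hc
      obtain ⟨hp, hl⟩ := preserves_of_rot k (fun x => lift_lemma h1 h2 h3 x)
      exact ⟨by rw [hgfs]; exact hp, fun l hl2 => by rw [hgfs]; exact hl l hl2⟩
    · exfalso
      have h1 : f (pt 1 0 0) = upt (Fdat k).1 := by rw [hk]; exact ha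
      have h2 : f (pt 0 1 0) = upt (Fdat k).2.1 := by rw [hk]; exact hb'
      have h3 : f (pt 0 0 1) = upt (Fdat k).2.2 := by rw [hk]; exact hc
      rw [det_of_basis h1 h2 h3, d_fdet k] at hdet
      norm_num at hdet
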